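/- arXiv:2605.09170 — 4 statements merged into one kernel-verified Lean document; each statement's English description precedes it below -/
import Mathlib

section
/- For all real numbers a, b, c, d and every t with 0 ≤ t ≤ 1/2, one has |(1 − 2t)(a − b) + t(max(c − a, 0) − max(d − b, 0))| ≤ (1 − t)|a − b| + t|c − d|. (This is the pointwise estimate |D_s v_t| ≤ (1 − t)|D_s u| + t|D_s v| for the test function v_t = (1 − 2t)u + t(v − u)⁺.) -/
/-- For all reals `a, b, c, d` and `0 ≤ t ≤ 1/2`,
`|(1 − 2t)(a − b) + t((c − a)⁺ − (d − b)⁺)| ≤ (1 − t)|a − b| + t|c − d|`.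
This is the pointwise estimate `|D_s v_t| ≤ (1 − t)|D_s u| + t|D_s v|`
for the test function `v_t = (1 − 2t)u + t(v − u)⁺`. -/
theorem stmt6 :
    ∀ (a b c d t : ℝ), 0 ≤ t → t ≤ 1/2 →
      |(1 - 2*t) * (a - b) + t * (max (c - a) 0 - max (d - b) 0)|
        ≤ (1 - t) * |a - b| + t * |c - d| := by
  intro a b c d t ht ht2
  rcases le_total (c - a) 0 with h1 | h1 <;> rcases le_total (d - b) 0 with h2 | h2 <;>
    rcases abs_cases (a - b) with ⟨e1, e1'⟩ | ⟨e1, e1'⟩ <;>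
    rcases abs_cases (c - d) with ⟨e2, e2'⟩ | ⟨e2, e2'⟩ <;>
    rw [abs_le] <;>
    constructor <;>
    simp only [max_eq_left h1, max_eq_right h1, max_eq_left h2, max_eq_right h2, e1, e2] <;>
    nlinarith [mul_nonneg ht (sub_nonneg.2 h1), mul_nonneg ht (sub_nonneg.2 h2)]
end

section
/- Let Ω ⊂ ℝᴺ be a measurable set of finite Lebesgue measure, 0 < γ < 1, and let u, v : Ω → [0,∞) be measurable with u > 0 almost everywhere, u^{1−γ} integrable on Ω, and v bounded. For 0 < t < 1/3 set v_t = (1 − 2t)u + t(v − u)⁺. Then limsup_{t → 0⁺} (1/t) ∫_Ω (v_t^{1−γ} − u^{1−γ})/(1 − γ) dx ≥ −2 ∫_{[v ≤ u]} u^{1−γ} dx + ∫_{[v > u]} (−3u^{1−γ} + u^{−γ} v) dx, where the last integral takes values in (−∞, +∞] and [v ≤ u] = {x ∈ Ω : v(x) ≤ u(x)}, [v > u] = {x ∈ Ω : v(x) > u(x)}. Equivalently, the right-hand side equals ∫_Ω u^{−γ}(−2u + (v − u)⁺) dx. -/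
open MeasureTheory Filter Set Topology
open scoped ENNReal

/-! The difference quotient `((v_t^{1-γ} - u^{1-γ})/(1-γ))/t` tends, as `t → 0⁺`, to the derivative
`u^{-γ}((v-u)⁺ - 2u)` of `t ↦ v_t^{1-γ}/(1-γ)` at `0`. Since `v_t ≥ (1-2t)u` and
`(1-2t)^{1-γ} ≥ 1-2t`, the quotient is bounded below by the integrable function
`-2u^{1-γ}/(1-γ)`, so Fatou's lemma bounds the liminf, hence the limsup, of its integral by the
integral of the derivative; splitting `Ω` into `[v ≤ u]` and `[v > u]` evaluates the latter. -/

lemma neg_two_mul_rpow_div_le {p U m t : ℝ} (hp0 : 0 < p) (hp1 : p ≤ 1) (hU : 0 ≤ U)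
    (hm : 0 ≤ m) (ht0 : 0 < t) (ht1 : t ≤ 1 / 2) :
    -2 * U ^ p / p ≤ (((1 - 2 * t) * U + t * m) ^ p - U ^ p) / p / t := by
  have hs : 0 ≤ 1 - 2 * t := by linarith
  have key : (1 - 2 * t) * U ^ p ≤ ((1 - 2 * t) * U + t * m) ^ p :=
    calc (1 - 2 * t) * U ^ p ≤ (1 - 2 * t) ^ p * U ^ p :=
          mul_le_mul_of_nonneg_right (Real.self_le_rpow_of_le_one hs (by linarith) hp1)
            (Real.rpow_nonneg hU p)
      _ = ((1 - 2 * t) * U) ^ p := (Real.mul_rpow hs hU).symm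
      _ ≤ ((1 - 2 * t) * U + t * m) ^ p :=
          Real.rpow_le_rpow (mul_nonneg hs hU) (by nlinarith) hp0.le
  rw [div_div, le_div_iff₀ (by positivity), div_mul_eq_mul_div, div_le_iff₀ hp0]
  nlinarith

lemma tendsto_rpow_perturbation_slope {γ U m : ℝ} (hγ : γ ≠ 1) (hU : 0 < U) :
    Tendsto (fun t => (((1 - 2 * t) * U + t * m) ^ (1 - γ) - U ^ (1 - γ)) / (1 - γ) / t)
      (𝓝[>] 0) (𝓝 (U ^ (-γ) * (m - 2 * U))) := by
  have hp : 1 - γ ≠ 0 := sub_ne_zero.mpr (Ne.symm hγ)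
  have hW : HasDerivAt (fun t : ℝ => (1 - 2 * t) * U + t * m) (m - 2 * U) 0 := by
    have := ((hasDerivAt_id' (0:ℝ)).mul_const (m - 2 * U)).const_add U
    rw [one_mul] at this
    exact this.congr_of_eventuallyEq (Eventually.of_forall fun t => by ring)
  have hd := ((hW.rpow_const (p := 1 - γ) (Or.inl (by simp [hU.ne']))).sub_const
    (U ^ (1 - γ))).div_const (1 - γ)
  convert hd.tendsto_slope_zero_right using 2 with t
  · simp only [zero_add, mul_zero, sub_zero, one_mul, zero_mul, add_zero, sub_self, zero_div,
      smul_eq_mul]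
    ring
  · simp only [mul_zero, sub_zero, one_mul, zero_mul, add_zero, sub_sub_cancel_left]
    field_simp

lemma EReal.coe_add_coe_add_sub {a b c : ℝ} {x : EReal} (hx : x ≠ ⊥) :
    (a : EReal) + (b + x) - c = ((a + b - c : ℝ) : EReal) + x := by
  induction x with
  | bot => exact absurd rfl hx
  | top => rw [EReal.coe_add_top, EReal.coe_add_top, EReal.top_sub_coe, EReal.coe_add_top]
  | coe x =>
    norm_cast
    ring

lemma EReal.coe_ennreal_sub_le_liminf {ι : Type*} {l : Filter ι} [l.NeBot] {a : ι → ℝ} {c : ℝ}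
    {X : ℝ≥0∞} (hX : X ≤ liminf (fun i => ENNReal.ofReal (a i + c)) l)
    (hpos : ∀ᶠ i in l, 0 ≤ a i + c) :
    (X : EReal) - c ≤ liminf (fun i => (a i : EReal)) l := by
  set φ : ℝ≥0∞ → EReal := fun z => (z : EReal) - c
  have hmono : Monotone φ := fun z w hzw =>
    EReal.sub_le_sub (EReal.coe_ennreal_le_coe_ennreal_iff.mpr hzw) le_rfl
  have hcont : Continuous φ := continuous_iff_continuousAt.mpr fun z =>
    (EReal.continuousAt_add (Or.inr (EReal.coe_ne_bot _)) (Or.inr (EReal.coe_ne_top _))).comp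
      (continuous_coe_ennreal_ereal.prodMk continuous_const).continuousAt
  calc φ X ≤ φ (liminf (fun i => ENNReal.ofReal (a i + c)) l) := hmono hX
    _ = liminf (φ ∘ fun i => ENNReal.ofReal (a i + c)) l :=
        hmono.map_liminf_of_continuousAt _ hcont.continuousAt
    _ = liminf (fun i => (a i : EReal)) l := by
        refine liminf_congr (hpos.mono fun i hi => ?_)
        simp only [φ, Function.comp_apply, EReal.coe_ennreal_ofReal, max_eq_left hi]
        rw [← EReal.coe_sub, _root_.add_sub_cancel_right]

namespace MeasureTheory

variable {α : Type*} [MeasurableSpace α] {μ : Measure α}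

lemma integrable_rpow_perturbation [IsFiniteMeasure μ] {p t M : ℝ} {u v : α → ℝ}
    (hp0 : 0 ≤ p) (hp1 : p ≤ 1) (ht0 : 0 ≤ t) (ht1 : t ≤ 1 / 2) (hu : AEMeasurable u μ)
    (hv : AEMeasurable v μ) (hu0 : ∀ᵐ x ∂μ, 0 ≤ u x) (hvM : ∀ᵐ x ∂μ, v x ≤ M)
    (hup : Integrable (fun x => u x ^ p) μ) :
    Integrable (fun x => ((1 - 2 * t) * u x + t * max (v x - u x) 0) ^ p) μ := by
  refine (hup.add (integrable_const (max M 0 ^ p))).mono' (by fun_prop) ?_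
  filter_upwards [hu0, hvM] with x hux hvx
  have hw0 : 0 ≤ (1 - 2 * t) * u x + t * max (v x - u x) 0 :=
    add_nonneg (mul_nonneg (by linarith) hux) (mul_nonneg ht0 (le_max_right _ _))
  have hwu : (1 - 2 * t) * u x + t * max (v x - u x) 0 ≤ u x + max M 0 := by
    have : max (v x - u x) 0 ≤ max M 0 := max_le_max_right 0 (by linarith)
    nlinarith [le_max_right (v x - u x) 0]
  rw [Real.norm_of_nonneg (Real.rpow_nonneg hw0 p)]
  exact (Real.rpow_le_rpow hw0 hwu hp0).trans
    (Real.rpow_add_le_add_rpow hux (le_max_right M 0) hp0 hp1)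

section Fatou

variable {ι : Type*} {l : Filter ι} [l.NeBot] [l.IsCountablyGenerated] {f : ι → α → ℝ}
  {F h : α → ℝ}

lemma lintegral_ofReal_add_le_liminf_integral
    (hf_meas : ∀ i, AEMeasurable (f i) μ) (hf_int : ∀ᶠ i in l, Integrable (f i) μ)
    (hh : Integrable h μ) (hfh : ∀ᶠ i in l, ∀ᵐ x ∂μ, -h x ≤ f i x)
    (hlim : ∀ᵐ x ∂μ, Tendsto (fun i => f i x) l (𝓝 (F x))) :
    ∫⁻ x, ENNReal.ofReal (F x + h x) ∂μ
      ≤ liminf (fun i => ENNReal.ofReal (∫ x, f i x ∂μ + ∫ x, h x ∂μ)) l :=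
  calc ∫⁻ x, ENNReal.ofReal (F x + h x) ∂μ
      = ∫⁻ x, liminf (fun i => ENNReal.ofReal (f i x + h x)) l ∂μ := by
        refine lintegral_congr_ae (hlim.mono fun x hx => ?_)
        exact ((ENNReal.continuous_ofReal.tendsto _).comp (hx.add_const (h x))).liminf_eq.symm
    _ ≤ liminf (fun i => ∫⁻ x, ENNReal.ofReal (f i x + h x) ∂μ) l :=
        lintegral_liminf_le' fun i => ((hf_meas i).add hh.aemeasurable).ennreal_ofReal
    _ = liminf (fun i => ENNReal.ofReal (∫ x, f i x ∂μ + ∫ x, h x ∂μ)) l := by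
        refine liminf_congr ((hf_int.and hfh).mono fun i ⟨hi, hih⟩ => ?_)
        rw [← integral_add hi hh]
        refine (ofReal_integral_eq_lintegral_ofReal (hi.add hh) ?_).symm
        filter_upwards [hih] with x hx
        simp only [Pi.zero_apply, Pi.add_apply]
        linarith

lemma coe_lintegral_ofReal_add_sub_le_liminf_integral
    (hf_meas : ∀ i, AEMeasurable (f i) μ) (hf_int : ∀ᶠ i in l, Integrable (f i) μ)
    (hh : Integrable h μ) (hfh : ∀ᶠ i in l, ∀ᵐ x ∂μ, -h x ≤ f i x)
    (hlim : ∀ᵐ x ∂μ, Tendsto (fun i => f i x) l (𝓝 (F x))) :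
    ((∫⁻ x, ENNReal.ofReal (F x + h x) ∂μ : ℝ≥0∞) : EReal) - ((∫ x, h x ∂μ : ℝ) : EReal)
      ≤ liminf (fun i => ((∫ x, f i x ∂μ : ℝ) : EReal)) l := by
  refine EReal.coe_ennreal_sub_le_liminf
    (lintegral_ofReal_add_le_liminf_integral hf_meas hf_int hh hfh hlim) ?_
  filter_upwards [hf_int, hfh] with i hi hih
  rw [← integral_add hi hh]
  refine integral_nonneg_of_ae (hih.mono fun x hx => ?_)
  simp only [Pi.zero_apply]
  linarith

end Fatou

lemma coe_lintegral_ofReal_sub_integral_eq {Ω : Set α} (hΩ : MeasurableSet Ω) {γ k : ℝ}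
    (hk : 3 ≤ k) {u v : α → ℝ} (hu : Measurable u) (hv : Measurable v)
    (hupos : ∀ᵐ x ∂μ.restrict Ω, 0 < u x) (huint : IntegrableOn (fun x => u x ^ (1 - γ)) Ω μ) :
    ((∫⁻ x in Ω, ENNReal.ofReal
          (u x ^ (-γ) * (max (v x - u x) 0 - 2 * u x) + k * u x ^ (1 - γ)) ∂μ : ℝ≥0∞) : EReal)
        - ((∫ x in Ω, k * u x ^ (1 - γ) ∂μ : ℝ) : EReal)
      = ((-2 * (∫ x in {x ∈ Ω | v x ≤ u x}, u x ^ (1 - γ) ∂μ)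
          - 3 * (∫ x in {x ∈ Ω | u x < v x}, u x ^ (1 - γ) ∂μ) : ℝ) : EReal)
        + ((∫⁻ x in {x ∈ Ω | u x < v x}, ENNReal.ofReal (u x ^ (-γ) * v x) ∂μ : ℝ≥0∞) : EReal) := by
  set S₁ := {x ∈ Ω | v x ≤ u x}
  set S₂ := {x ∈ Ω | u x < v x}
  have hS₁ : MeasurableSet S₁ := hΩ.inter (measurableSet_le hv hu)
  have hS₂ : MeasurableSet S₂ := hΩ.inter (measurableSet_lt hu hv)
  have hS₁Ω : S₁ ⊆ Ω := sep_subset _ _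
  have hS₂Ω : S₂ ⊆ Ω := sep_subset _ _
  have hΩ_eq : Ω = S₁ ∪ S₂ := by
    ext x
    simp only [S₁, S₂, mem_union, mem_sep_iff, ← and_or_left, le_or_gt, and_true]
  have hdisj : Disjoint S₁ S₂ :=
    disjoint_left.mpr fun x hx₁ hx₂ => (not_lt.mpr hx₁.2) hx₂.2
  have hpow : ∀ x, 0 < u x → u x ^ (-γ) * u x = u x ^ (1 - γ) := fun x hx => by
    rw [← Real.rpow_add_one hx.ne']
    ring_nf
  have hlin : ∀ s ⊆ Ω, MeasurableSet s → ∀ c, 0 ≤ c →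
      ∫⁻ x in s, ENNReal.ofReal (c * u x ^ (1 - γ)) ∂μ
        = ENNReal.ofReal (c * ∫ x in s, u x ^ (1 - γ) ∂μ) := by
    intro s hsΩ hs c hc
    rw [← integral_const_mul, ofReal_integral_eq_lintegral_ofReal ((huint.mono_set hsΩ).const_mul c)]
    filter_upwards [ae_restrict_of_ae_restrict_of_subset hsΩ hupos] with x hx
    exact mul_nonneg hc (Real.rpow_nonneg hx.le _)
  have h₁ : ∫⁻ x in S₁, ENNReal.ofReal
      (u x ^ (-γ) * (max (v x - u x) 0 - 2 * u x) + k * u x ^ (1 - γ)) ∂μ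
        = ENNReal.ofReal ((k - 2) * ∫ x in S₁, u x ^ (1 - γ) ∂μ) := by
    rw [← hlin S₁ hS₁Ω hS₁ _ (by linarith)]
    refine lintegral_congr_ae ?_
    filter_upwards [ae_restrict_mem hS₁,
      ae_restrict_of_ae_restrict_of_subset hS₁Ω hupos] with x hxS hx
    rw [max_eq_right (sub_nonpos.mpr hxS.2), zero_sub, mul_neg, mul_comm 2, ← mul_assoc, hpow x hx]
    ring_nf
  have h₂ : ∫⁻ x in S₂, ENNReal.ofReal
      (u x ^ (-γ) * (max (v x - u x) 0 - 2 * u x) + k * u x ^ (1 - γ)) ∂μ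
        = ENNReal.ofReal ((k - 3) * ∫ x in S₂, u x ^ (1 - γ) ∂μ)
          + ∫⁻ x in S₂, ENNReal.ofReal (u x ^ (-γ) * v x) ∂μ := by
    rw [← hlin S₂ hS₂Ω hS₂ _ (by linarith), ← lintegral_add_left
      ((hu.pow_const _).const_mul _).ennreal_ofReal]
    refine lintegral_congr_ae ?_
    filter_upwards [ae_restrict_mem hS₂,
      ae_restrict_of_ae_restrict_of_subset hS₂Ω hupos] with x hxS hx
    have hu_v : 0 ≤ u x ^ (-γ) * v x :=
      mul_nonneg (Real.rpow_nonneg hx.le _) (hx.trans hxS.2).le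
    rw [← ENNReal.ofReal_add (mul_nonneg (by linarith) (Real.rpow_nonneg hx.le _)) hu_v,
      max_eq_left (sub_nonneg.mpr hxS.2.le), ← hpow x hx]
    ring_nf
  have hint : ∫ x in Ω, k * u x ^ (1 - γ) ∂μ
      = k * ∫ x in S₁, u x ^ (1 - γ) ∂μ + k * ∫ x in S₂, u x ^ (1 - γ) ∂μ := by
    rw [integral_const_mul, hΩ_eq, setIntegral_union hdisj hS₂ (huint.mono_set hS₁Ω)
      (huint.mono_set hS₂Ω), mul_add]
  have hA : 0 ≤ ∫ x in S₁, u x ^ (1 - γ) ∂μ := setIntegral_nonneg_of_ae_restrict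
    ((ae_restrict_of_ae_restrict_of_subset hS₁Ω hupos).mono fun x hx => Real.rpow_nonneg hx.le _)
  have hB : 0 ≤ ∫ x in S₂, u x ^ (1 - γ) ∂μ := setIntegral_nonneg_of_ae_restrict
    ((ae_restrict_of_ae_restrict_of_subset hS₂Ω hupos).mono fun x hx => Real.rpow_nonneg hx.le _)
  rw [hint, hΩ_eq, lintegral_union hS₂ hdisj, h₁, h₂, EReal.coe_ennreal_add,
    EReal.coe_ennreal_add, EReal.coe_ennreal_ofReal, EReal.coe_ennreal_ofReal,
    max_eq_left (by nlinarith), max_eq_left (by nlinarith),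
    EReal.coe_add_coe_add_sub (EReal.coe_ennreal_ne_bot _)]
  congr 2
  ring

end MeasureTheory

theorem stmt7_general
    (N : ℕ) (Ω : Set (EuclideanSpace ℝ (Fin N))) (hΩ : MeasurableSet Ω)
    (hfin : volume Ω < ⊤)
    (γ : ℝ) (hγ0 : 0 < γ) (hγ1 : γ < 1)
    (u v : EuclideanSpace ℝ (Fin N) → ℝ)
    (humeas : Measurable u) (hvmeas : Measurable v)
    (hupos : ∀ᵐ x ∂(volume.restrict Ω), 0 < u x)
    (huint : IntegrableOn (fun x => u x ^ (1 - γ)) Ω)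
    (hvbdd : ∃ M : ℝ, ∀ x ∈ Ω, v x ≤ M) :
    (((-2 * (∫ x in {x ∈ Ω | v x ≤ u x}, u x ^ (1 - γ))
        - 3 * (∫ x in {x ∈ Ω | u x < v x}, u x ^ (1 - γ))) : ℝ) : EReal)
      + ENNReal.toEReal (∫⁻ x in {x ∈ Ω | u x < v x}, ENNReal.ofReal (u x ^ (-γ) * v x))
    ≤ Filter.limsup
        (fun t : ℝ =>
          (((∫ x in Ω, (((1 - 2*t) * u x + t * max (v x - u x) 0) ^ (1 - γ)
              - u x ^ (1 - γ)) / (1 - γ)) / t : ℝ) : EReal))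
        (nhdsWithin 0 (Set.Ioo 0 (1/3 : ℝ))) := by
  obtain ⟨M, hM⟩ := hvbdd
  have hp : 0 < 1 - γ := by linarith
  have : IsFiniteMeasure (volume.restrict Ω) := isFiniteMeasure_restrict.mpr hfin.ne
  -- `3 / (1 - γ)` dominates the constant `2 / (1 - γ)` of the lower bound and is at least `3`.
  have hk : 3 ≤ 3 / (1 - γ) := le_div_self (by norm_num) hp (by linarith)
  have hsmall : ∀ᶠ t in 𝓝[>] (0 : ℝ), t ∈ Ioo 0 (1 / 2) := Ioo_mem_nhdsGT (by norm_num)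
  have hvM : ∀ᵐ x ∂(volume.restrict Ω), v x ≤ M := (ae_restrict_mem hΩ).mono hM
  have hfatou := coe_lintegral_ofReal_add_sub_le_liminf_integral (l := 𝓝[>] (0 : ℝ))
    (f := fun t x => (((1 - 2 * t) * u x + t * max (v x - u x) 0) ^ (1 - γ) - u x ^ (1 - γ))
      / (1 - γ) / t)
    (F := fun x => u x ^ (-γ) * (max (v x - u x) 0 - 2 * u x))
    (h := fun x => 3 / (1 - γ) * u x ^ (1 - γ))
    (fun t => by fun_prop) ?_ (huint.const_mul _) ?_
    (hupos.mono fun x hx => tendsto_rpow_perturbation_slope hγ1.ne hx)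
  · rw [coe_lintegral_ofReal_sub_integral_eq hΩ hk humeas hvmeas hupos huint] at hfatou
    rw [nhdsWithin_Ioo_eq_nhdsGT (by norm_num)]
    refine hfatou.trans (le_of_eq_of_le ?_ liminf_le_limsup)
    simp_rw [integral_div]
  · filter_upwards [hsmall] with t ht
    exact ((integrable_rpow_perturbation hp.le (by linarith) ht.1.le ht.2.le humeas.aemeasurable
      hvmeas.aemeasurable (hupos.mono fun x hx => hx.le) hvM huint).sub huint).div_const _
      |>.div_const _
  · filter_upwards [hsmall] with t ht
    filter_upwards [hupos] with x hx
    have hU : 0 ≤ u x ^ (1 - γ) := Real.rpow_nonneg hx.le _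
    calc -(3 / (1 - γ) * u x ^ (1 - γ)) ≤ -2 * u x ^ (1 - γ) / (1 - γ) := by
          rw [div_mul_eq_mul_div, ← neg_div]
          gcongr
          linarith
      _ ≤ _ := neg_two_mul_rpow_div_le hp (by linarith) hx.le (le_max_right _ _) ht.1 ht.2.le

/-- With `v_t = (1 − 2t)u + t(v − u)⁺` (for `0 < t < 1/3`),
`limsup_{t→0⁺} (1/t) ∫_Ω (v_t^{1−γ} − u^{1−γ})/(1−γ)
  ≥ −2∫_{[v ≤ u]} u^{1−γ} + ∫_{[v > u]} (−3u^{1−γ} + u^{−γ}v)`,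
where the right-hand side takes values in `(−∞, +∞]` (formalized in `EReal`,
splitting the last integral into its finite part and its nonnegative singular part). -/
theorem stmt7
    (N : ℕ) (Ω : Set (EuclideanSpace ℝ (Fin N))) (hΩ : MeasurableSet Ω)
    (hfin : volume Ω < ⊤)
    (γ : ℝ) (hγ0 : 0 < γ) (hγ1 : γ < 1)
    (u v : EuclideanSpace ℝ (Fin N) → ℝ)
    (humeas : Measurable u) (hvmeas : Measurable v)
    (hu0 : ∀ x ∈ Ω, 0 ≤ u x) (hv0 : ∀ x ∈ Ω, 0 ≤ v x)
    (hupos : ∀ᵐ x ∂(volume.restrict Ω), 0 < u x)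
    (huint : IntegrableOn (fun x => u x ^ (1 - γ)) Ω)
    (hvbdd : ∃ M : ℝ, ∀ x ∈ Ω, v x ≤ M) :
    (((-2 * (∫ x in {x ∈ Ω | v x ≤ u x}, u x ^ (1 - γ))
        - 3 * (∫ x in {x ∈ Ω | u x < v x}, u x ^ (1 - γ))) : ℝ) : EReal)
      + ENNReal.toEReal (∫⁻ x in {x ∈ Ω | u x < v x}, ENNReal.ofReal (u x ^ (-γ) * v x))
    ≤ Filter.limsup
        (fun t : ℝ =>
          (((∫ x in Ω, (((1 - 2*t) * u x + t * max (v x - u x) 0) ^ (1 - γ)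
              - u x ^ (1 - γ)) / (1 - γ)) / t : ℝ) : EReal))
        (nhdsWithin 0 (Set.Ioo 0 (1/3 : ℝ))) :=
  stmt7_general N Ω hΩ hfin γ hγ0 hγ1 u v humeas hvmeas hupos huint hvbdd
end

section
/- Let φ : (0,∞) → (0,∞) satisfy (φ₁) and (φ₂), Φ(t) = ∫₀^{|t|} τφ(τ) dτ, and let Ψ(t) = ∫₀^{|t|} (∫_{𝕊^{N−1}} Φ(ρ|z_N|) dS_z) dρ/ρ. Then Ψ is strictly convex on ℝ; equivalently, the map t ↦ (1/t) ∫_{𝕊^{N−1}} Φ(t|z_N|) dS_z is strictly increasing on (0,∞). -/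
open MeasureTheory Filter Set
open scoped ENNReal NNReal

set_option maxHeartbeats 1000000

private lemma aux_coord_le_norm {ι : Type*} [Fintype ι] (x : EuclideanSpace ℝ ι) (i : ι) :
    |x i| ≤ ‖x‖ := by
  rw [EuclideanSpace.norm_eq, ← Real.sqrt_sq_eq_abs]
  apply Real.sqrt_le_sqrt
  calc x i ^ 2 = ‖x i‖ ^ 2 := by rw [Real.norm_eq_abs, sq_abs]
  _ ≤ ∑ j, ‖x j‖ ^ 2 :=
    Finset.single_le_sum (f := fun j => ‖x j‖ ^ 2) (fun j _ => sq_nonneg _) (Finset.mem_univ i)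

private lemma aux_cap_pos (n : ℕ) :
    0 < μH[(n:ℝ)] {z : EuclideanSpace ℝ (Fin (n+1)) |
      z ∈ Metric.sphere (0 : EuclideanSpace ℝ (Fin (n+1))) 1 ∧ (1:ℝ)/2 ≤ z (Fin.last n)} := by
  set E := EuclideanSpace ℝ (Fin (n+1))
  set C : Set E := {z : E |
      z ∈ Metric.sphere (0 : E) 1 ∧ (1:ℝ)/2 ≤ z (Fin.last n)} with hC
  -- the projection forgetting the last coordinate
  set P : E → (Fin n → ℝ) := fun z j => z ((Fin.last n).succAbove j) with hPdef
  have hP : LipschitzWith 1 P := by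
    apply LipschitzWith.of_dist_le_mul
    intro z w
    rw [NNReal.coe_one, one_mul]
    refine (dist_pi_le_iff dist_nonneg).2 fun j => ?_
    have h := aux_coord_le_norm (z - w) ((Fin.last n).succAbove j)
    have hzw : (z - w) ((Fin.last n).succAbove j) = z ((Fin.last n).succAbove j)
        - w ((Fin.last n).succAbove j) := rfl
    rw [hzw] at h
    refine le_trans ?_ (le_of_eq (dist_eq_norm z w).symm)
    simpa [hPdef, Real.dist_eq] using h
  -- the projection image contains a set of positive measure
  have hsub : {y : Fin n → ℝ | ∑ j, y j ^ 2 < 1/2} ⊆ P '' C := by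
    intro y hy
    have hy' : ∑ j, y j ^ 2 < 1/2 := hy
    have hQ0 : (0:ℝ) ≤ ∑ j, y j ^ 2 := Finset.sum_nonneg fun j _ => sq_nonneg _
    set a : ℝ := Real.sqrt (1 - ∑ j, y j ^ 2) with ha
    have ha2 : a ^ 2 = 1 - ∑ j, y j ^ 2 := Real.sq_sqrt (by linarith)
    have ha0 : 0 ≤ a := Real.sqrt_nonneg _
    have ha12 : (1:ℝ)/2 ≤ a := by nlinarith
    set z : E := (WithLp.equiv 2 (Fin (n+1) → ℝ)).symm ((Fin.last n).insertNth a y) with hz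
    have hzcoord : ∀ i, z i = Fin.insertNth (α := fun _ => ℝ) (Fin.last n) a y i := fun i => by
      rw [hz]; exact rfl
    refine ⟨z, ⟨?_, ?_⟩, ?_⟩
    · rw [EuclideanSpace.sphere_zero_eq _ zero_le_one]
      show ∑ i, z i ^ 2 = 1 ^ 2
      have := Fin.sum_univ_succAbove (fun i => z i ^ 2) (Fin.last n)
      rw [this]
      simp only [hzcoord, Fin.insertNth_apply_same, Fin.insertNth_apply_succAbove]
      rw [ha2]; ring
    · show (1:ℝ)/2 ≤ z (Fin.last n)
      rw [hzcoord, Fin.insertNth_apply_same]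
      exact ha12
    · funext j
      show z ((Fin.last n).succAbove j) = y j
      rw [hzcoord, Fin.insertNth_apply_succAbove]
  have hopen : IsOpen {y : Fin n → ℝ | ∑ j, y j ^ 2 < 1/2} :=
    isOpen_lt (by continuity) continuous_const
  have hne : ({y : Fin n → ℝ | ∑ j, y j ^ 2 < 1/2}).Nonempty := ⟨0, by simp⟩
  have hpos : 0 < volume {y : Fin n → ℝ | ∑ j, y j ^ 2 < 1/2} :=
    hopen.measure_pos volume hne
  have himg : μH[(n:ℝ)] (P '' C) ≤ 1 * μH[(n:ℝ)] C := by
    simpa using hP.hausdorffMeasure_image_le (by positivity : (0:ℝ) ≤ (n:ℝ)) C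
  have hvol : volume {y : Fin n → ℝ | ∑ j, y j ^ 2 < 1/2} ≤ μH[(n:ℝ)] (P '' C) := by
    have hpi : (μH[(n:ℝ)] : Measure (Fin n → ℝ)) = volume := by
      simpa using hausdorffMeasure_pi_real (ι := Fin n)
    rw [← hpi]
    exact measure_mono hsub
  calc (0:ℝ≥0∞) < volume {y : Fin n → ℝ | ∑ j, y j ^ 2 < 1/2} := hpos
  _ ≤ μH[(n:ℝ)] (P '' C) := hvol
  _ ≤ 1 * μH[(n:ℝ)] C := himg
  _ = μH[(n:ℝ)] C := one_mul _


private lemma aux_sqrt_sub {a b : ℝ} (ha : 0 ≤ a) (hb : 0 ≤ b)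
    (h : 0 < Real.sqrt a + Real.sqrt b) :
    |Real.sqrt a - Real.sqrt b| * (Real.sqrt a + Real.sqrt b) ≤ |a - b| := by
  have key : (Real.sqrt a - Real.sqrt b) * (Real.sqrt a + Real.sqrt b) = a - b := by
    nlinarith [Real.sq_sqrt ha, Real.sq_sqrt hb]
  rw [← abs_of_nonneg h.le, ← abs_mul, key]

private lemma aux_sphere_fin (n : ℕ) :
    μH[(n:ℝ)] (Metric.sphere (0 : EuclideanSpace ℝ (Fin (n+1))) 1) ≠ ⊤ := by
  classical
  set E := EuclideanSpace ℝ (Fin (n+1))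
  set Q : (Fin n → ℝ) → ℝ := fun y => ∑ j, y j ^ 2 with hQdef
  have hQcont : Continuous Q := by continuity
  have hQ0 : ∀ y, 0 ≤ Q y := fun y => Finset.sum_nonneg fun j _ => sq_nonneg _
  have hcoord : ∀ y : Fin n → ℝ, ∀ j, y j ^ 2 ≤ Q y := fun y j =>
    Finset.single_le_sum (f := fun j => y j ^ 2) (fun j _ => sq_nonneg _) (Finset.mem_univ j)
  have hninv : (0:ℝ) < ((n:ℝ)+1)⁻¹ := by positivity
  set D : Set (Fin n → ℝ) := {y | Q y ≤ 1 - ((n:ℝ)+1)⁻¹} with hDdef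
  set F : Fin (n+1) × Bool → (Fin n → ℝ) → E := fun p y =>
    (WithLp.equiv 2 (Fin (n+1) → ℝ)).symm
      (Fin.insertNth (α := fun _ => ℝ) p.1 ((if p.2 then 1 else -1) * Real.sqrt (1 - Q y)) y)
    with hFdef
  have hFcoord : ∀ p y i, F p y i =
      Fin.insertNth (α := fun _ => ℝ) p.1 ((if p.2 then 1 else -1) * Real.sqrt (1 - Q y)) y i :=
    fun p y i => rfl
  -- covering
  have hcover : Metric.sphere (0 : E) 1 ⊆ ⋃ p : Fin (n+1) × Bool, F p '' D := by
    intro z hz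
    rw [EuclideanSpace.sphere_zero_eq _ zero_le_one] at hz
    have hs : ∑ i, z i ^ 2 = 1 := by have hz' : ∑ i, z i ^ 2 = 1 ^ 2 := hz; simpa using hz'
    obtain ⟨i, -, hmax⟩ := Finset.exists_max_image Finset.univ (fun i => |z i|)
      ⟨Fin.last n, Finset.mem_univ _⟩
    have hle : ∀ j, z j ^ 2 ≤ z i ^ 2 := fun j => by
      have := hmax j (Finset.mem_univ j)
      nlinarith [abs_nonneg (z j), abs_nonneg (z i), sq_abs (z j), sq_abs (z i)]
    have hcard : (1:ℝ) ≤ ((n:ℝ)+1) * z i ^ 2 := by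
      have := Finset.sum_le_card_nsmul Finset.univ (fun j => z j ^ 2) (z i ^ 2)
        (fun j _ => hle j)
      simp only [Finset.card_univ, Fintype.card_fin, nsmul_eq_mul] at this
      rw [hs] at this
      push_cast at this
      linarith
    have hzi : ((n:ℝ)+1)⁻¹ ≤ z i ^ 2 := by
      rw [inv_eq_one_div, div_le_iff₀ (by positivity)]
      linarith
    set y : Fin n → ℝ := fun j => z (i.succAbove j) with hy
    have hQy : Q y = 1 - z i ^ 2 := by
      have := Fin.sum_univ_succAbove (fun k => z k ^ 2) i
      rw [hs] at this
      simp only [hQdef, hy]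
      linarith [this]
    have hyD : y ∈ D := by
      rw [hDdef, mem_setOf_eq, hQy]
      linarith
    refine mem_iUnion.2 ⟨(i, decide (0 ≤ z i)), ⟨y, hyD, ?_⟩⟩
    have h1Q : 1 - Q y = z i ^ 2 := by rw [hQy]; ring
    have hsqrt : Real.sqrt (1 - Q y) = |z i| := by
      rw [h1Q, Real.sqrt_sq_eq_abs]
    refine PiLp.ext fun k => ?_
    rw [hFcoord]
    have : Fin.insertNth (α := fun _ => ℝ) i
        ((if decide (0 ≤ z i) then (1:ℝ) else -1) * Real.sqrt (1 - Q y)) y = fun k => z k := by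
      rw [Fin.insertNth_eq_iff]
      constructor
      · rw [hsqrt]
        by_cases h0 : 0 ≤ z i
        · simp [h0, abs_of_nonneg h0]
        · simp [h0, abs_of_neg (lt_of_not_ge h0)]
      · funext j; rfl
    rw [this]
  -- Lipschitz bound on each chart
  have hlip : ∀ p : Fin (n+1) × Bool, LipschitzOnWith (((n:ℝ≥0)+1)^2) (F p) D := by
    intro p
    apply LipschitzOnWith.of_dist_le_mul
    intro y hyD y' hy'D
    have hyQ : Q y ≤ 1 - ((n:ℝ)+1)⁻¹ := hyD
    have hy'Q : Q y' ≤ 1 - ((n:ℝ)+1)⁻¹ := hy'D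
    set d := dist y y' with hd
    have hd0 : 0 ≤ d := dist_nonneg
    have hdj : ∀ j, |y j - y' j| ≤ d := fun j => by
      have := dist_le_pi_dist y y' j
      rwa [Real.dist_eq] at this
    -- bound on coordinates sizes
    have hy1 : ∀ j, |y j| ≤ 1 := fun j => by
      have h1 := hcoord y j
      have : y j ^ 2 ≤ 1 := by linarith
      nlinarith [abs_nonneg (y j), sq_abs (y j)]
    have hy'1 : ∀ j, |y' j| ≤ 1 := fun j => by
      have h1 := hcoord y' j
      have : y' j ^ 2 ≤ 1 := by linarith
      nlinarith [abs_nonneg (y' j), sq_abs (y' j)]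
    -- bound |Q y - Q y'|
    have hQd : |Q y - Q y'| ≤ 2 * n * d := by
      rw [hQdef]
      simp only
      rw [← Finset.sum_sub_distrib]
      calc |∑ j, (y j ^ 2 - y' j ^ 2)| ≤ ∑ j, |y j ^ 2 - y' j ^ 2| :=
            Finset.abs_sum_le_sum_abs _ _
      _ ≤ ∑ _j : Fin n, 2 * d := by
          apply Finset.sum_le_sum
          intro j _
          have : y j ^ 2 - y' j ^ 2 = (y j - y' j) * (y j + y' j) := by ring
          rw [this, abs_mul]
          have h2 : |y j + y' j| ≤ 2 := by
            calc |y j + y' j| ≤ |y j| + |y' j| := abs_add_le _ _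
            _ ≤ 2 := by linarith [hy1 j, hy'1 j]
          calc |y j - y' j| * |y j + y' j| ≤ d * 2 :=
            mul_le_mul (hdj j) h2 (abs_nonneg _) hd0
          _ = 2 * d := by ring
      _ = 2 * n * d := by
          rw [Finset.sum_const, Finset.card_univ, Fintype.card_fin, nsmul_eq_mul]; ring
    -- the sqrt terms
    set a := 1 - Q y with haq
    set b := 1 - Q y' with hbq
    have ha : ((n:ℝ)+1)⁻¹ ≤ a := by rw [haq]; linarith
    have hb : ((n:ℝ)+1)⁻¹ ≤ b := by rw [hbq]; linarith
    set c := Real.sqrt (((n:ℝ)+1)⁻¹) with hcdef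
    have hc0 : 0 < c := Real.sqrt_pos.2 hninv
    have hc2 : c ^ 2 = ((n:ℝ)+1)⁻¹ := Real.sq_sqrt hninv.le
    have hca : c ≤ Real.sqrt a := Real.sqrt_le_sqrt ha
    have hcb : c ≤ Real.sqrt b := Real.sqrt_le_sqrt hb
    have hsum : 0 < Real.sqrt a + Real.sqrt b := by linarith
    set s := Real.sqrt a - Real.sqrt b with hsdef
    have hs1 : |s| * (Real.sqrt a + Real.sqrt b) ≤ |a - b| :=
      aux_sqrt_sub (by linarith) (by linarith) hsum
    have hab : |a - b| = |Q y - Q y'| := by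
      rw [haq, hbq, show (1 - Q y) - (1 - Q y') = -(Q y - Q y') by ring, abs_neg]
    have hs2 : |s| * (2 * c) ≤ 2 * n * d := by
      calc |s| * (2 * c) ≤ |s| * (Real.sqrt a + Real.sqrt b) := by
            apply mul_le_mul_of_nonneg_left (by linarith) (abs_nonneg _)
      _ ≤ |a - b| := hs1
      _ = |Q y - Q y'| := hab
      _ ≤ 2 * n * d := hQd
    have hinv : ((n:ℝ)+1)⁻¹ * ((n:ℝ)+1) = 1 := inv_mul_cancel₀ (by positivity)
    have hs3 : s ^ 2 ≤ (n:ℝ)^2 * ((n:ℝ)+1) * d ^ 2 := by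
      have h4 : (|s| * (2*c))^2 ≤ (2 * n * d)^2 := by
        have h0 : 0 ≤ |s| * (2*c) := by positivity
        nlinarith [hs2]
      have h5 : (|s| * (2*c))^2 = s^2 * 4 * c^2 := by
        rw [mul_pow, sq_abs]; ring
      rw [h5, hc2] at h4
      have h6 := mul_le_mul_of_nonneg_right h4 (show (0:ℝ) ≤ (n:ℝ)+1 by positivity)
      have h7 : s ^ 2 * 4 * ((n:ℝ)+1)⁻¹ * ((n:ℝ)+1) = 4 * s ^ 2 := by
        rw [mul_assoc (s ^ 2 * 4), hinv]; ring
      rw [h7] at h6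
      have h8 : (2 * (n:ℝ) * d) ^ 2 * ((n:ℝ)+1) = 4 * ((n:ℝ)^2 * ((n:ℝ)+1) * d ^ 2) := by ring
      linarith [h6, h8.le, h8.ge]
    -- assemble the norm bound
    rw [dist_eq_norm]
    have hdiffcoord : ∀ i, (F p y - F p y') i = F p y i - F p y' i := fun i => rfl
    have hnorm : ‖F p y - F p y'‖ = Real.sqrt (∑ i, (F p y i - F p y' i) ^ 2) := by
      rw [EuclideanSpace.norm_eq]
      congr 1
      apply Finset.sum_congr rfl
      intro i _
      rw [hdiffcoord, Real.norm_eq_abs, sq_abs]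
    rw [hnorm]
    have hsplit : ∑ i, (F p y i - F p y' i) ^ 2
        = ((if p.2 then (1:ℝ) else -1) * Real.sqrt (1 - Q y)
            - (if p.2 then (1:ℝ) else -1) * Real.sqrt (1 - Q y')) ^ 2
          + ∑ j, (y j - y' j) ^ 2 := by
      rw [Fin.sum_univ_succAbove (fun i => (F p y i - F p y' i) ^ 2) p.1]
      congr 1
      · rw [hFcoord, hFcoord, Fin.insertNth_apply_same, Fin.insertNth_apply_same]
      · apply Finset.sum_congr rfl
        intro j _
        rw [hFcoord, hFcoord, Fin.insertNth_apply_succAbove, Fin.insertNth_apply_succAbove]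
    have hsq : ((if p.2 then (1:ℝ) else -1) * Real.sqrt (1 - Q y)
            - (if p.2 then (1:ℝ) else -1) * Real.sqrt (1 - Q y')) ^ 2 = s ^ 2 := by
      rw [hsdef, haq, hbq]
      by_cases hb2 : p.2 <;> simp [hb2] <;> ring
    have hsum2 : ∑ j, (y j - y' j) ^ 2 ≤ (n:ℝ) * d ^ 2 := by
      calc ∑ j, (y j - y' j) ^ 2 ≤ ∑ _j : Fin n, d ^ 2 := by
            apply Finset.sum_le_sum
            intro j _
            nlinarith [hdj j, abs_nonneg (y j - y' j), sq_abs (y j - y' j)]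
      _ = (n:ℝ) * d ^ 2 := by
          rw [Finset.sum_const, Finset.card_univ, Fintype.card_fin, nsmul_eq_mul]
    have htot : ∑ i, (F p y i - F p y' i) ^ 2 ≤ (((n:ℝ)+1)^2 * d) ^ 2 := by
      rw [hsplit, hsq]
      have hN : (n:ℝ) ≥ 0 := Nat.cast_nonneg n
      nlinarith [hs3, hsum2, sq_nonneg d, sq_nonneg ((n:ℝ) - 1)]
    calc Real.sqrt (∑ i, (F p y i - F p y' i) ^ 2) ≤ Real.sqrt ((((n:ℝ)+1)^2 * d) ^ 2) :=
          Real.sqrt_le_sqrt htot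
    _ = |((n:ℝ)+1)^2 * d| := Real.sqrt_sq_eq_abs _
    _ = ((n:ℝ)+1)^2 * d := by rw [abs_of_nonneg (by positivity)]
    _ = ((((n:ℝ≥0)+1)^2 : ℝ≥0) : ℝ) * d := by push_cast; ring
  -- D has finite Hausdorff measure
  have hDfin : μH[(n:ℝ)] D ≠ ⊤ := by
    have hsub : D ⊆ Metric.closedBall (0 : Fin n → ℝ) 1 := by
      intro y hyD
      have hyQ : Q y ≤ 1 - ((n:ℝ)+1)⁻¹ := hyD
      rw [Metric.mem_closedBall, dist_zero_right]
      refine (pi_norm_le_iff_of_nonneg zero_le_one).2 fun j => ?_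
      rw [Real.norm_eq_abs]
      have h1 := hcoord y j
      nlinarith [abs_nonneg (y j), sq_abs (y j)]
    have hpi : (μH[(n:ℝ)] : Measure (Fin n → ℝ)) = volume := by
      simpa using hausdorffMeasure_pi_real (ι := Fin n)
    rw [hpi]
    exact ne_top_of_le_ne_top
      (IsCompact.measure_lt_top (isCompact_closedBall _ _)).ne (measure_mono hsub)
  -- conclude
  have hbound : μH[(n:ℝ)] (Metric.sphere (0 : E) 1)
      ≤ ∑' p : Fin (n+1) × Bool, ((((n:ℝ≥0)+1)^2 : ℝ≥0) : ℝ≥0∞) ^ (n:ℝ) * μH[(n:ℝ)] D := by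
    calc μH[(n:ℝ)] (Metric.sphere (0 : E) 1) ≤ μH[(n:ℝ)] (⋃ p : Fin (n+1) × Bool, F p '' D) :=
          measure_mono hcover
    _ ≤ ∑' p : Fin (n+1) × Bool, μH[(n:ℝ)] (F p '' D) := measure_iUnion_le _
    _ ≤ ∑' p : Fin (n+1) × Bool, ((((n:ℝ≥0)+1)^2 : ℝ≥0) : ℝ≥0∞) ^ (n:ℝ) * μH[(n:ℝ)] D :=
          ENNReal.tsum_le_tsum fun p => (hlip p).hausdorffMeasure_image_le (Nat.cast_nonneg n)
  refine ne_top_of_le_ne_top ?_ hbound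
  rw [tsum_fintype]
  refine (ENNReal.sum_lt_top.2 fun p _ => ?_).ne
  exact ENNReal.mul_lt_top
    (ENNReal.rpow_lt_top_of_nonneg (Nat.cast_nonneg n) ENNReal.coe_ne_top)
    hDfin.lt_top


/-- `Ψ(t) = ∫₀^{|t|} (∫_{𝕊^{N−1}} Φ(ρ|z_N|) dS_z) dρ/ρ` is strictly convex
on `ℝ`; equivalently, `t ↦ (1/t)∫_{𝕊^{N−1}} Φ(t|z_N|) dS_z` is strictly increasing on `(0,∞)`. -/
theorem stmt11
    (N : ℕ) (hN : 1 ≤ N)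
    (φ : ℝ → ℝ)
    (hφpos : ∀ t : ℝ, 0 < t → 0 < φ t)
    (hφmono : StrictMonoOn (fun t => t * φ t) (Set.Ioi (0:ℝ)))
    (hφ0 : Tendsto (fun t => t * φ t) (nhdsWithin 0 (Set.Ioi 0)) (nhds 0))
    (hφtop : Tendsto (fun t => t * φ t) atTop atTop)
    (Φ : ℝ → ℝ)
    (hΦ : ∀ t : ℝ, Φ t = ∫ τ in (0:ℝ)..|t|, τ * φ τ)
    (Ψ : ℝ → ℝ)
    (hΨ : ∀ t : ℝ, Ψ t = ∫ ρ in (0:ℝ)..|t|,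
        (∫ z in Metric.sphere (0 : EuclideanSpace ℝ (Fin N)) 1,
            Φ (ρ * |z ⟨N - 1, by omega⟩|) ∂(μH[(N:ℝ) - 1])) / ρ) :
    StrictConvexOn ℝ Set.univ Ψ
    ∧ StrictMonoOn
        (fun t : ℝ => (1 / t) * ∫ z in Metric.sphere (0 : EuclideanSpace ℝ (Fin N)) 1,
            Φ (t * |z ⟨N - 1, by omega⟩|) ∂(μH[(N:ℝ) - 1]))
        (Set.Ioi 0) := by
  obtain ⟨n, rfl⟩ : ∃ n, N = n + 1 := ⟨N - 1, by omega⟩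
  ---- Part 1 : properties of `f τ = τ * φ τ` and of `Φ`.
  set f : ℝ → ℝ := fun τ => τ * φ τ with hfdef
  have hf0 : f 0 = 0 := zero_mul _
  have hfpos : ∀ t, 0 < t → 0 < f t := fun t ht => mul_pos ht (hφpos t ht)
  have hfmono : MonotoneOn f (Ici 0) := by
    intro x hx y hy hxy
    rcases eq_or_lt_of_le hxy with rfl | hlt
    · exact le_refl _
    rcases (mem_Ici.1 hx).eq_or_lt with h0 | h0
    · rw [← h0, hf0]
      exact (hfpos y (by rw [← h0] at hlt; exact hlt)).le
    · exact (hφmono h0 (h0.trans hlt) hlt).le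
  have hfint : ∀ a b : ℝ, 0 ≤ a → 0 ≤ b → IntervalIntegrable f volume a b := by
    intro a b ha hb
    refine (hfmono.mono ?_).intervalIntegrable
    intro x hx
    rcases Set.mem_uIcc.1 hx with h | h
    · exact le_trans ha h.1
    · exact le_trans hb h.1
  have hΦabs : ∀ t, Φ |t| = Φ t := fun t => by rw [hΦ, hΦ, abs_abs]
  have hΦ' : ∀ t, 0 ≤ t → Φ t = ∫ τ in (0:ℝ)..t, f τ := fun t ht => by
    rw [hΦ, abs_of_nonneg ht]
  have hΦ0 : Φ 0 = 0 := by rw [hΦ]; simp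
  -- strict lower bound for integrals of `f`
  have hIlow : ∀ x y : ℝ, 0 ≤ x → x < y → f x * (y - x) < ∫ τ in x..y, f τ := by
    intro x y hx hxy
    set m := (x + y) / 2 with hm
    have hxm : x < m := by rw [hm]; linarith
    have hmy : m < y := by rw [hm]; linarith
    have hm0 : 0 ≤ m := by linarith
    have hsplit : (∫ τ in x..m, f τ) + (∫ τ in m..y, f τ) = ∫ τ in x..y, f τ :=
      intervalIntegral.integral_add_adjacent_intervals (hfint x m hx hm0)
        (hfint m y hm0 (by linarith))
    have h1 : f x * (m - x) ≤ ∫ τ in x..m, f τ := by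
      have := intervalIntegral.integral_mono_on (μ := volume) (f := fun _ => f x) (g := f)
        hxm.le (intervalIntegrable_const) (hfint x m hx hm0)
        (fun u hu => hfmono hx (le_trans hx hu.1) hu.1)
      rwa [intervalIntegral.integral_const, smul_eq_mul, mul_comm] at this
    have h2 : f m * (y - m) ≤ ∫ τ in m..y, f τ := by
      have := intervalIntegral.integral_mono_on (μ := volume) (f := fun _ => f m) (g := f)
        hmy.le (intervalIntegrable_const) (hfint m y hm0 (by linarith))
        (fun u hu => hfmono hm0 (le_trans hm0 hu.1) hu.1)
      rwa [intervalIntegral.integral_const, smul_eq_mul, mul_comm] at this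
    have h3 : f x < f m := by
      rcases hx.eq_or_lt with h0 | h0
      · rw [← h0, hf0]; exact hfpos m (by rw [← h0] at hxm; exact hxm)
      · exact hφmono h0 (h0.trans hxm) hxm
    nlinarith [h1, h2, h3, hsplit]
  have hIup : ∀ x y : ℝ, 0 ≤ x → x ≤ y → (∫ τ in x..y, f τ) ≤ f y * (y - x) := by
    intro x y hx hxy
    have hy : 0 ≤ y := le_trans hx hxy
    have := intervalIntegral.integral_mono_on (μ := volume) (f := f) (g := fun _ => f y)
      hxy (hfint x y hx hy) (intervalIntegrable_const)
      (fun u hu => hfmono (le_trans hx hu.1) hy hu.2)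
    rwa [intervalIntegral.integral_const, smul_eq_mul, mul_comm] at this
  have hΦpos : ∀ t, 0 < t → 0 < Φ t := by
    intro t ht
    rw [hΦ' t ht.le]
    have := hIlow 0 t le_rfl ht
    rw [hf0] at this
    linarith
  have hΦnonneg : ∀ t, 0 ≤ Φ t := by
    intro t
    rw [← hΦabs]
    rcases (abs_nonneg t).eq_or_lt with h | h
    · rw [← h, hΦ0]
    · exact (hΦpos _ h).le
  have hΦsub : ∀ x y : ℝ, 0 ≤ x → x ≤ y → Φ y - Φ x = ∫ τ in x..y, f τ := by
    intro x y hx hxy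
    have hy : 0 ≤ y := le_trans hx hxy
    rw [hΦ' x hx, hΦ' y hy]
    exact intervalIntegral.integral_interval_sub_left (hfint 0 y le_rfl hy)
      (hfint 0 x le_rfl hx)
  have hΦmono : MonotoneOn Φ (Ici 0) := by
    intro x hx y hy hxy
    have h := hΦsub x y hx hxy
    have h2 : 0 ≤ ∫ τ in x..y, f τ := by
      apply intervalIntegral.integral_nonneg hxy
      intro u hu
      rcases (le_trans hx hu.1).eq_or_lt with h0 | h0
      · rw [← h0, hf0]
      · exact (hfpos u h0).le
    linarith
  -- ratio monotonicity : `Φ x / x < Φ y / y` for `0 < x < y`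
  have hratio : ∀ x y : ℝ, 0 < x → x < y → Φ x * y < Φ y * x := by
    intro x y hx hxy
    have h1 : Φ y - Φ x = ∫ τ in x..y, f τ := hΦsub x y hx.le hxy.le
    have h2 : f x * (y - x) < ∫ τ in x..y, f τ := hIlow x y hx.le hxy
    have h3 : Φ x ≤ f x * x := by
      have := hIup 0 x le_rfl hx.le
      rw [hΦ' x hx.le]
      linarith
    nlinarith [mul_lt_mul_of_pos_left h2 hx,
      mul_le_mul_of_nonneg_right h3 (sub_pos.2 hxy).le]
  -- Lipschitz bounds and continuity of `Φ`
  have hΦlipM : ∀ M, 0 < M → ∀ s t : ℝ, s ∈ Icc (0:ℝ) M → t ∈ Icc (0:ℝ) M →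
      |Φ s - Φ t| ≤ f M * |s - t| := by
    have key : ∀ M, 0 < M → ∀ s t : ℝ, s ∈ Icc (0:ℝ) M → t ∈ Icc (0:ℝ) M → t ≤ s →
        |Φ s - Φ t| ≤ f M * |s - t| := by
      intro M hM s t hs ht hts
      have h1 : Φ s - Φ t = ∫ τ in t..s, f τ := hΦsub t s ht.1 hts
      have h2 : (∫ τ in t..s, f τ) ≤ f M * (s - t) := by
        have := intervalIntegral.integral_mono_on (μ := volume) (f := f) (g := fun _ => f M)
          hts (hfint t s ht.1 hs.1) (intervalIntegrable_const)
          (fun u hu => hfmono (le_trans ht.1 hu.1) hM.le (le_trans hu.2 hs.2))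
        rwa [intervalIntegral.integral_const, smul_eq_mul, mul_comm] at this
      have h3 : 0 ≤ ∫ τ in t..s, f τ := by
        apply intervalIntegral.integral_nonneg hts
        intro u hu
        rcases (le_trans ht.1 hu.1).eq_or_lt with h0 | h0
        · rw [← h0, hf0]
        · exact (hfpos u h0).le
      rw [abs_of_nonneg (by linarith), abs_of_nonneg (by linarith)]
      linarith
    intro M hM s t hs ht
    rcases le_total t s with h | h
    · exact key M hM s t hs ht h
    · rw [abs_sub_comm (Φ s), abs_sub_comm s]
      exact key M hM t s ht hs h
  have hΦcont : Continuous Φ := by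
    rw [continuous_iff_continuousAt]
    intro x
    set M : ℝ := |x| + 1 with hMdef
    have hM : 0 < M := by positivity
    have hlip : LipschitzOnWith (Real.toNNReal (f M)) Φ (Icc (-M) M) := by
      apply LipschitzOnWith.of_dist_le_mul
      intro s hs t ht
      rw [Real.dist_eq, Real.dist_eq, Real.coe_toNNReal _ (hfpos M hM).le]
      calc |Φ s - Φ t| = |Φ (|s|) - Φ (|t|)| := by rw [hΦabs, hΦabs]
      _ ≤ f M * |(|s| - |t|)| :=
          hΦlipM M hM |s| |t| ⟨abs_nonneg _, abs_le.2 ⟨hs.1, hs.2⟩⟩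
            ⟨abs_nonneg _, abs_le.2 ⟨ht.1, ht.2⟩⟩
      _ ≤ f M * |s - t| :=
          mul_le_mul_of_nonneg_left (abs_abs_sub_abs_le_abs_sub _ _) (hfpos M hM).le
    exact hlip.continuousOn.continuousAt
      (Icc_mem_nhds (by simp [hMdef]; linarith [neg_abs_le x, abs_nonneg x])
        (by simp [hMdef]; linarith [le_abs_self x, abs_nonneg x]))

  ---- Part 2 : the sphere integral.
  have hcast : ((n+1:ℕ):ℝ) - 1 = (n:ℝ) := by push_cast; ring
  simp only [hcast] at hΨ ⊢
  set E := EuclideanSpace ℝ (Fin (n+1)) with hE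
  set ν : Measure E := (μH[(n:ℝ)] : Measure E).restrict (Metric.sphere (0:E) 1) with hν
  haveI : IsFiniteMeasure ν :=
    ⟨by rw [hν, Measure.restrict_apply_univ]; exact (aux_sphere_fin n).lt_top⟩
  set A : E → ℝ := fun z => |z (Fin.last n)| with hA
  have hA0 : ∀ z, 0 ≤ A z := fun z => abs_nonneg _
  have hA1 : ∀ z ∈ Metric.sphere (0:E) 1, A z ≤ 1 := by
    intro z hz
    have h := aux_coord_le_norm z (Fin.last n)
    rwa [show ‖z‖ = 1 by simpa [dist_zero_right] using (Metric.mem_sphere.1 hz)] at h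
  have hAcont : Continuous A := by
    have h1 : Continuous fun z : E => z (Fin.last n) :=
      (EuclideanSpace.proj (𝕜 := ℝ) (Fin.last n)).continuous
    exact h1.abs
  set S : ℝ → ℝ := fun t => ∫ z, Φ (t * A z) ∂ν with hS
  have hmeas : ∀ t : ℝ, AEStronglyMeasurable (fun z => Φ (t * A z)) ν :=
    fun t => (hΦcont.comp (continuous_const.mul hAcont)).aestronglyMeasurable
  have hint : ∀ t : ℝ, 0 ≤ t → Integrable (fun z => Φ (t * A z)) ν := by
    intro t ht
    apply Integrable.mono' (integrable_const (Φ t)) (hmeas t)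
    filter_upwards [ae_restrict_mem Metric.isClosed_sphere.measurableSet] with z hz
    rw [Real.norm_eq_abs, abs_of_nonneg (hΦnonneg _)]
    exact hΦmono (mem_Ici.2 (mul_nonneg ht (hA0 z))) (mem_Ici.2 ht)
      (by nlinarith [hA1 z hz, hA0 z])
  set C : Set E := {z : E | z ∈ Metric.sphere (0:E) 1 ∧ (1:ℝ)/2 ≤ z (Fin.last n)} with hCdef
  have hCsub : C ⊆ Metric.sphere (0:E) 1 := fun z hz => hz.1
  have hCpos : 0 < ν C := by
    rw [hν, Measure.restrict_apply' Metric.isClosed_sphere.measurableSet,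
      Set.inter_eq_left.2 hCsub]
    exact aux_cap_pos n
  have hCA : ∀ z ∈ C, (1:ℝ)/2 ≤ A z := fun z hz => le_trans hz.2 (le_abs_self _)
  -- pointwise ratio comparison
  have hpt : ∀ a : ℝ, 0 < a → ∀ s t : ℝ, 0 < s → s < t → Φ (s*a)/s < Φ (t*a)/t := by
    intro a ha s t hs hst
    rw [div_lt_div_iff₀ hs (hs.trans hst)]
    have h := hratio (s*a) (t*a) (by positivity) (by nlinarith)
    have h2 : (Φ (s*a) * t) * a < (Φ (t*a) * s) * a := by nlinarith [h]
    exact lt_of_mul_lt_mul_right h2 ha.le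
  have hSmono : ∀ s t : ℝ, 0 < s → s < t → S s / s < S t / t := by
    intro s t hs hst
    have ht : 0 < t := hs.trans hst
    set u : E → ℝ := fun z => Φ (t * A z)/t - Φ (s * A z)/s with hu
    have hu_int : Integrable u ν :=
      ((hint t ht.le).div_const t).sub ((hint s hs.le).div_const s)
    have hu_nonneg : 0 ≤ᵐ[ν] u := by
      filter_upwards [ae_restrict_mem Metric.isClosed_sphere.measurableSet] with z hz
      rcases (hA0 z).eq_or_lt with h0 | h0
      · have hz0 : u z = 0 := by
          simp only [hu]
          rw [← h0, mul_zero, mul_zero, hΦ0, zero_div, zero_div, sub_self]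
        exact le_of_eq hz0.symm
      · exact sub_nonneg.2 (hpt (A z) h0 s t hs hst).le
    have hsupp : C ⊆ Function.support u := by
      intro z hz
      exact ne_of_gt (sub_pos.2 (hpt (A z) (lt_of_lt_of_le one_half_pos (hCA z hz)) s t hs hst))
    have hintpos : 0 < ∫ z, u z ∂ν :=
      (integral_pos_iff_support_of_nonneg_ae hu_nonneg hu_int).2
        (lt_of_lt_of_le hCpos (measure_mono hsupp))
    have hsplit : ∫ z, u z ∂ν = S t / t - S s / s := by
      rw [hS]
      simp only [hu]
      rw [integral_sub ((hint t ht.le).div_const t) ((hint s hs.le).div_const s),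
        integral_div, integral_div]
    linarith [hsplit ▸ hintpos]
  have hSpos : ∀ t : ℝ, 0 < t → 0 < S t / t := by
    intro t ht
    have h1 : 0 < S t := by
      rw [hS]
      refine (integral_pos_iff_support_of_nonneg_ae ?_ (hint t ht.le)).2 ?_
      · filter_upwards with z using hΦnonneg _
      · refine lt_of_lt_of_le hCpos (measure_mono ?_)
        intro z hz
        exact ne_of_gt (hΦpos _ (by nlinarith [hCA z hz]))
    exact div_pos h1 ht
  ---- Part 3 : strict convexity of Ψ
  set gg : ℝ → ℝ := fun ρ => S ρ / ρ with hgg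
  have hΨ' : ∀ t, Ψ t = ∫ ρ in (0:ℝ)..|t|, gg ρ := hΨ
  have hgg0 : gg 0 = 0 := div_zero _
  set hh : ℝ → ℝ := fun ρ => if 0 ≤ ρ then gg ρ else -gg (-ρ) with hhh
  have hhmono : StrictMono hh := by
    intro a b hab
    simp only [hhh]
    by_cases ha : 0 ≤ a
    · rw [if_pos ha, if_pos (le_trans ha hab.le)]
      rcases ha.eq_or_lt with h0 | h0
      · rw [← h0, hgg0]; exact hSpos b (by rw [← h0] at hab; exact hab)
      · exact hSmono a b h0 hab
    · rw [if_neg ha]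
      push_neg at ha
      by_cases hb : 0 ≤ b
      · rw [if_pos hb]
        have h1 : 0 < gg (-a) := hSpos (-a) (by linarith)
        rcases hb.eq_or_lt with h0 | h0
        · rw [← h0, hgg0]; linarith
        · linarith [hSpos b h0]
      · rw [if_neg hb]
        push_neg at hb
        have h2 : gg (-b) < gg (-a) := hSmono (-b) (-a) (by linarith) (by linarith)
        linarith
  have hhint : ∀ a b : ℝ, IntervalIntegrable hh volume a b := fun a b =>
    hhmono.monotone.intervalIntegrable
  have hΨhh : ∀ t, Ψ t = ∫ ρ in (0:ℝ)..t, hh ρ := by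
    intro t
    rcases le_or_gt 0 t with ht | ht
    · rw [hΨ' t, abs_of_nonneg ht]
      apply intervalIntegral.integral_congr
      intro ρ hρ
      rw [uIcc_of_le ht] at hρ
      simp only [hhh]
      rw [if_pos hρ.1]
    · rw [hΨ' t, abs_of_neg ht]
      have h1 : ∫ ρ in (0:ℝ)..(-t), gg ρ = ∫ ρ in (0:ℝ)..(-t), -hh (-ρ) := by
        apply intervalIntegral.integral_congr
        intro ρ hρ
        rw [uIcc_of_le (by linarith : (0:ℝ) ≤ -t)] at hρ
        simp only [hhh]
        rcases hρ.1.eq_or_lt with h0 | h0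
        · rw [← h0, neg_zero, if_pos le_rfl, hgg0, neg_zero]
        · rw [if_neg (by linarith : ¬ (0:ℝ) ≤ -ρ), neg_neg, neg_neg]
      rw [h1, intervalIntegral.integral_neg, intervalIntegral.integral_comp_neg, neg_zero,
        neg_neg, ← intervalIntegral.integral_symm]
  have hup : ∀ a b : ℝ, a < b → (∫ ρ in a..b, hh ρ) < hh b * (b - a) := by
    intro a b hab
    set m := (a+b)/2 with hm
    have ham : a < m := by rw [hm]; linarith
    have hmb : m < b := by rw [hm]; linarith
    have hsplit : (∫ ρ in a..m, hh ρ) + (∫ ρ in m..b, hh ρ) = ∫ ρ in a..b, hh ρ :=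
      intervalIntegral.integral_add_adjacent_intervals (hhint a m) (hhint m b)
    have h1 : (∫ ρ in a..m, hh ρ) ≤ hh m * (m - a) := by
      have := intervalIntegral.integral_mono_on (μ := volume) (f := hh) (g := fun _ => hh m)
        ham.le (hhint a m) intervalIntegrable_const
        (fun u hu => hhmono.monotone hu.2)
      rwa [intervalIntegral.integral_const, smul_eq_mul, mul_comm] at this
    have h2 : (∫ ρ in m..b, hh ρ) ≤ hh b * (b - m) := by
      have := intervalIntegral.integral_mono_on (μ := volume) (f := hh) (g := fun _ => hh b)
        hmb.le (hhint m b) intervalIntegrable_const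
        (fun u hu => hhmono.monotone hu.2)
      rwa [intervalIntegral.integral_const, smul_eq_mul, mul_comm] at this
    have h3 : hh m * (m - a) < hh b * (m - a) :=
      mul_lt_mul_of_pos_right (hhmono hmb) (by linarith)
    have h4 : hh b * (b - a) = hh b * (m - a) + hh b * (b - m) := by ring_nf
    linarith
  have hlow : ∀ a b : ℝ, a < b → hh a * (b - a) < ∫ ρ in a..b, hh ρ := by
    intro a b hab
    set m := (a+b)/2 with hm
    have ham : a < m := by rw [hm]; linarith
    have hmb : m < b := by rw [hm]; linarith
    have hsplit : (∫ ρ in a..m, hh ρ) + (∫ ρ in m..b, hh ρ) = ∫ ρ in a..b, hh ρ :=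
      intervalIntegral.integral_add_adjacent_intervals (hhint a m) (hhint m b)
    have h1 : hh a * (m - a) ≤ ∫ ρ in a..m, hh ρ := by
      have := intervalIntegral.integral_mono_on (μ := volume) (f := fun _ => hh a) (g := hh)
        ham.le intervalIntegrable_const (hhint a m)
        (fun u hu => hhmono.monotone hu.1)
      rwa [intervalIntegral.integral_const, smul_eq_mul, mul_comm] at this
    have h2 : hh m * (b - m) ≤ ∫ ρ in m..b, hh ρ := by
      have := intervalIntegral.integral_mono_on (μ := volume) (f := fun _ => hh m) (g := hh)
        hmb.le intervalIntegrable_const (hhint m b)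
        (fun u hu => hhmono.monotone hu.1)
      rwa [intervalIntegral.integral_const, smul_eq_mul, mul_comm] at this
    have h3 : hh a * (b - m) < hh m * (b - m) :=
      mul_lt_mul_of_pos_right (hhmono ham) (by linarith)
    have h4 : hh a * (b - a) = hh a * (m - a) + hh a * (b - m) := by ring_nf
    linarith
  have hconv : StrictConvexOn ℝ (univ : Set ℝ) Ψ := by
    apply strictConvexOn_of_slope_strict_mono_adjacent convex_univ
    intro x y z _ _ hxy hyz
    have e1 : Ψ y - Ψ x = ∫ ρ in x..y, hh ρ := by
      rw [hΨhh y, hΨhh x]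
      exact (intervalIntegral.integral_interval_sub_left (hhint 0 y) (hhint 0 x)).symm ▸ rfl
    have e2 : Ψ z - Ψ y = ∫ ρ in y..z, hh ρ := by
      rw [hΨhh z, hΨhh y]
      exact (intervalIntegral.integral_interval_sub_left (hhint 0 z) (hhint 0 y)).symm ▸ rfl
    have l1 : Ψ y - Ψ x < hh y * (y - x) := by rw [e1]; exact hup x y hxy
    have l2 : hh y * (z - y) < Ψ z - Ψ y := by rw [e2]; exact hlow y z hyz
    rw [div_lt_div_iff₀ (by linarith) (by linarith)]
    nlinarith [mul_lt_mul_of_pos_right l1 (by linarith : (0:ℝ) < z - y),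
      mul_lt_mul_of_pos_right l2 (by linarith : (0:ℝ) < y - x)]
  refine ⟨hconv, ?_⟩
  intro a ha b hb hab
  have h := hSmono a b (mem_Ioi.1 ha) hab
  rw [div_eq_inv_mul, div_eq_inv_mul, ← one_div, ← one_div] at h
  exact h
end

section
/- Let N ≥ 2, let φ : (0,∞) → (0,∞) satisfy (φ₁) and (φ₂), Φ(t) = ∫₀^{|t|} τφ(τ) dτ, and assume Φ satisfies the Δ₂-condition: there exists K > 1 with Φ(2t) ≤ KΦ(t) for all t ≥ 0. Define Ψ(t) = ∫₀^{|t|} (∫_{𝕊^{N−1}} Φ(ρ|z_N|) dS_z) dρ/ρ. Then Ψ is an N-function equivalent to Φ: there exist constants k₁, k₂ > 0 such that k₁ Φ(t) ≤ Ψ(t) ≤ k₂ Φ(t) for all t > 0. -/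
/-!
Write `H ρ = ∫_{𝕊^{N-1}} Φ(ρ|z_N|) dS_z`, so that `Ψ t = ∫₀ᵗ H ρ dρ/ρ`. Since `|z_N| ≤ 1` on the
sphere, `H ρ ≤ |𝕊^{N-1}| Φ ρ`, and `Φ ρ ≤ ρ · ρφ(ρ)` because `τφ(τ)` increases; integrating gives
`Ψ t ≤ |𝕊^{N-1}| Φ t`. Conversely `H ρ ≥ |C| Φ(ρ/2)` on the cap `C = {|z_N| ≥ 1/2}`; as `H`
increases, `Ψ t ≥ ∫_{t/2}^t H ρ dρ/ρ ≥ H(t/2)/2 ≥ |C| Φ(t/4)/2`, and `Δ₂` applied twice gives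
`Φ t ≤ K² Φ(t/4)`.

The geometric input is that the sphere has finite and the cap positive `(N-1)`-dimensional
Hausdorff measure: two stereographic charts, restricted to closed balls of radius 2, are Lipschitz
and cover the sphere, while the orthogonal projection of the cap onto `z_Nᗮ` contains a ball.
-/

open MeasureTheory Filter Set Module Metric
open scoped RealInnerProductSpace ENNReal

section Primitive

variable {g : ℝ → ℝ} {a b t : ℝ}

theorem monotoneOn_Ici_of_strictMonoOn_Ioi {φ : ℝ → ℝ} (hφ : ∀ t, 0 < t → 0 < φ t)
    (hmono : StrictMonoOn (fun t ↦ t * φ t) (Ioi 0)) : MonotoneOn (fun t ↦ t * φ t) (Ici 0) := by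
  intro a ha b _ hab
  rcases (mem_Ici.1 ha).eq_or_lt with rfl | ha'
  · rcases hab.eq_or_lt with rfl | hb'
    · exact le_rfl
    · simpa using (mul_pos hb' (hφ b hb')).le
  · exact hmono.monotoneOn ha' (ha'.trans_le hab) hab

theorem intervalIntegrable_of_monotoneOn_Ici (hg : MonotoneOn g (Ici 0)) (ha : 0 ≤ a)
    (hb : 0 ≤ b) : IntervalIntegrable g volume a b :=
  (hg.mono fun _ hx ↦ le_trans (le_min ha hb) hx.1).intervalIntegrable

theorem continuous_intervalIntegral_abs_of_monotoneOn (hg : MonotoneOn g (Ici 0)) :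
    Continuous fun t ↦ ∫ τ in (0 : ℝ)..|t|, g τ := by
  have hg' : Monotone fun τ ↦ g (max τ 0) := fun a b hab ↦
    hg (le_max_right a 0) (le_max_right b 0) (max_le_max hab le_rfl)
  have heq : (fun t ↦ ∫ τ in (0 : ℝ)..|t|, g τ) = fun t ↦ ∫ τ in (0 : ℝ)..|t|, g (max τ 0) :=
    funext fun t ↦ intervalIntegral.integral_congr fun τ hτ ↦ by
      rw [uIcc_of_le (abs_nonneg t)] at hτ
      rw [max_eq_left hτ.1]
  rw [heq]
  exact (intervalIntegral.continuous_primitive (fun _ _ ↦ hg'.intervalIntegrable) 0).comp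
    continuous_abs

theorem monotoneOn_intervalIntegral_of_monotoneOn (hg : MonotoneOn g (Ici 0))
    (hg₀ : ∀ τ, 0 ≤ τ → 0 ≤ g τ) :
    MonotoneOn (fun t ↦ ∫ τ in (0 : ℝ)..t, g τ) (Ici 0) := fun _ ha _ hb hab ↦
  intervalIntegral.integral_mono_interval le_rfl ha hab
    ((ae_restrict_iff' measurableSet_Ioc).2 (ae_of_all _ fun τ hτ ↦ hg₀ τ hτ.1.le))
    (intervalIntegrable_of_monotoneOn_Ici hg le_rfl hb)

theorem intervalIntegral_le_mul_of_monotoneOn (hg : MonotoneOn g (Ici 0)) (ht : 0 ≤ t) :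
    ∫ τ in (0 : ℝ)..t, g τ ≤ t * g t := by
  calc ∫ τ in (0 : ℝ)..t, g τ ≤ ∫ _ in (0 : ℝ)..t, g t :=
        intervalIntegral.integral_mono_on ht (intervalIntegrable_of_monotoneOn_Ici hg le_rfl ht)
          intervalIntegrable_const fun τ hτ ↦ hg hτ.1 ht hτ.2
    _ = t * g t := by simp

end Primitive

section SetIntegralBounds

variable {X : Type*} {S : Set X} {w : X → ℝ} {Φ : ℝ → ℝ} {ρ c : ℝ}

theorem apply_mul_abs_le (hΦ : MonotoneOn Φ (Ici 0)) (hw : ∀ x ∈ S, |w x| ≤ 1) (hρ : 0 ≤ ρ)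
    {x : X} (hx : x ∈ S) : Φ (ρ * |w x|) ≤ Φ ρ :=
  hΦ (mul_nonneg hρ (abs_nonneg _)) hρ (mul_le_of_le_one_right hρ (hw x hx))

variable [MeasurableSpace X] {μ : Measure X}

theorem integrableOn_comp_mul_abs (hΦc : Continuous Φ) (hΦ : MonotoneOn Φ (Ici 0))
    (hΦ₀ : ∀ t, 0 ≤ t → 0 ≤ Φ t) (hwm : Measurable w) (hw : ∀ x ∈ S, |w x| ≤ 1)
    (hS : MeasurableSet S) (hμS : μ S ≠ ∞) (hρ : 0 ≤ ρ) :
    IntegrableOn (fun x ↦ Φ (ρ * |w x|)) S μ :=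
  Measure.integrableOn_of_bounded hμS
    (hΦc.measurable.comp (measurable_const.mul hwm.abs)).aestronglyMeasurable
    ((ae_restrict_iff' hS).2 (ae_of_all _ fun x hx ↦ by
      rw [Real.norm_of_nonneg (hΦ₀ _ (mul_nonneg hρ (abs_nonneg _)))]
      exact apply_mul_abs_le hΦ hw hρ hx))

theorem setIntegral_comp_mul_abs_le (hΦ : MonotoneOn Φ (Ici 0)) (hΦ₀ : ∀ t, 0 ≤ t → 0 ≤ Φ t)
    (hw : ∀ x ∈ S, |w x| ≤ 1) (hμS : μ S ≠ ∞) (hρ : 0 ≤ ρ) :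
    ∫ x in S, Φ (ρ * |w x|) ∂μ ≤ μ.real S * Φ ρ := by
  calc ∫ x in S, Φ (ρ * |w x|) ∂μ ≤ ‖∫ x in S, Φ (ρ * |w x|) ∂μ‖ := le_abs_self _
    _ ≤ Φ ρ * μ.real S := norm_setIntegral_le_of_norm_le_const hμS.lt_top fun x hx ↦ by
        rw [Real.norm_of_nonneg (hΦ₀ _ (mul_nonneg hρ (abs_nonneg _)))]
        exact apply_mul_abs_le hΦ hw hρ hx
    _ = μ.real S * Φ ρ := mul_comm _ _

theorem measureReal_mul_le_setIntegral_comp_mul_abs (hΦc : Continuous Φ)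
    (hΦ : MonotoneOn Φ (Ici 0)) (hΦ₀ : ∀ t, 0 ≤ t → 0 ≤ Φ t) (hwm : Measurable w)
    (hw : ∀ x ∈ S, |w x| ≤ 1) (hS : MeasurableSet S) (hμS : μ S ≠ ∞) (hc : 0 ≤ c)
    (hρ : 0 ≤ ρ) :
    μ.real {x ∈ S | c ≤ |w x|} * Φ (c * ρ) ≤ ∫ x in S, Φ (ρ * |w x|) ∂μ := by
  have hint := integrableOn_comp_mul_abs hΦc hΦ hΦ₀ hwm hw hS hμS hρ
  have hA : MeasurableSet {x ∈ S | c ≤ |w x|} :=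
    hS.inter (measurableSet_le measurable_const hwm.abs)
  calc μ.real {x ∈ S | c ≤ |w x|} * Φ (c * ρ)
      ≤ ∫ x in {x ∈ S | c ≤ |w x|}, Φ (ρ * |w x|) ∂μ := by
        rw [mul_comm]
        refine setIntegral_ge_of_const_le_real hA (measure_ne_top_of_subset (sep_subset S _) hμS)
          (fun x hx ↦ hΦ (mul_nonneg hc hρ) (mul_nonneg hρ (abs_nonneg _)) ?_)
          (hint.mono_set (sep_subset S _))
        rw [mul_comm]
        exact mul_le_mul_of_nonneg_left hx.2 hρ
    _ ≤ ∫ x in S, Φ (ρ * |w x|) ∂μ :=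
        setIntegral_mono_set hint ((ae_restrict_iff' hS).2 (ae_of_all _ fun x _ ↦
          hΦ₀ _ (mul_nonneg hρ (abs_nonneg _)))) (Eventually.of_forall (sep_subset S _))

theorem monotoneOn_setIntegral_comp_mul_abs (hΦc : Continuous Φ) (hΦ : MonotoneOn Φ (Ici 0))
    (hΦ₀ : ∀ t, 0 ≤ t → 0 ≤ Φ t) (hwm : Measurable w) (hw : ∀ x ∈ S, |w x| ≤ 1)
    (hS : MeasurableSet S) (hμS : μ S ≠ ∞) :
    MonotoneOn (fun ρ ↦ ∫ x in S, Φ (ρ * |w x|) ∂μ) (Ici 0) := fun _ ha _ hb hab ↦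
  integral_mono (integrableOn_comp_mul_abs hΦc hΦ hΦ₀ hwm hw hS hμS ha)
    (integrableOn_comp_mul_abs hΦc hΦ hΦ₀ hwm hw hS hμS hb) fun _ ↦
    hΦ (mem_Ici.2 (mul_nonneg ha (abs_nonneg _))) (mem_Ici.2 (mul_nonneg hb (abs_nonneg _)))
      (mul_le_mul_of_nonneg_right hab (abs_nonneg _))

end SetIntegralBounds

section Sphere

variable {E : Type*} [NormedAddCommGroup E] [InnerProductSpace ℝ E]

theorem inner_stereoInvFunAux {v w : E} (hv : ‖v‖ = 1) (hw : w ∈ (ℝ ∙ v)ᗮ) :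
    ⟪v, stereoInvFunAux v w⟫ = (‖w‖ ^ 2 - 4) / (‖w‖ ^ 2 + 4) := by
  rw [Submodule.mem_orthogonal_singleton_iff_inner_right] at hw
  simp [inner_smul_right, inner_add_right, hw, hv, div_eq_inv_mul]

theorem sphere_inter_inner_nonpos_subset {v : E} (hv : ‖v‖ = 1) :
    sphere (0 : E) 1 ∩ {x | ⟪v, x⟫ ≤ 0} ⊆
      (stereoInvFunAux v ∘ (↑)) '' closedBall (0 : (ℝ ∙ v)ᗮ) 2 := by
  rintro x ⟨hx, hxv⟩
  have hxv' : x ≠ v := by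
    rintro rfl
    norm_num [hv] at hxv
  set w := stereoToFun v x
  have hinv : stereoInvFunAux v w = x :=
    congrArg Subtype.val (stereo_left_inv hv (x := ⟨x, hx⟩) hxv')
  refine ⟨w, ?_, hinv⟩
  rw [← hinv, mem_ofPred_eq, inner_stereoInvFunAux hv w.2, div_nonpos_iff] at hxv
  have : ‖(w : E)‖ ^ 2 ≤ 2 ^ 2 := by
    rcases hxv with h | h <;> nlinarith [sq_nonneg ‖(w : E)‖]
  rw [mem_closedBall_zero_iff]
  exact (pow_le_pow_iff_left₀ (norm_nonneg _) zero_le_two two_ne_zero).1 this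

variable [MeasurableSpace E] [BorelSpace E] {n : ℕ} [Fact (finrank ℝ E = n + 1)]

theorem hausdorffMeasure_stereoInvFunAux_image_closedBall_lt_top {v : E} (hv : v ≠ 0) (r : ℝ) :
    μH[n] ((stereoInvFunAux v ∘ (↑)) '' closedBall (0 : (ℝ ∙ v)ᗮ) r) < ⊤ := by
  have : FiniteDimensional ℝ E := .of_fact_finrank_eq_succ n
  have hLip : LocallyLipschitz (stereoInvFunAux v ∘ ((↑) : (ℝ ∙ v)ᗮ → E)) :=
    contDiff_stereoInvFunAux.locallyLipschitz.comp (LipschitzWith.subtype_val _).locallyLipschitz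
  obtain ⟨K, hK⟩ :=
    hLip.locallyLipschitzOn.exists_lipschitzOnWith_of_compact (isCompact_closedBall 0 r)
  refine (hK.hausdorffMeasure_image_le n.cast_nonneg).trans_lt (ENNReal.mul_lt_top (by simp) ?_)
  rw [← Submodule.finrank_orthogonal_span_singleton (𝕜 := ℝ) (n := n) hv]
  exact (isCompact_closedBall _ _).measure_lt_top

theorem hausdorffMeasure_sphere_lt_top : μH[n] (sphere (0 : E) 1) < ⊤ := by
  have : Nontrivial E := Module.nontrivial_of_finrank_eq_succ (R := ℝ) (n := n) Fact.out
  obtain ⟨v, hv⟩ := exists_norm_eq E zero_le_one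
  have hv₀ : v ≠ 0 := norm_ne_zero_iff.1 (by simp [hv])
  have hv' : ‖-v‖ = 1 := by rwa [norm_neg]
  have hcover : sphere (0 : E) 1 ⊆ (stereoInvFunAux v ∘ (↑)) '' closedBall (0 : (ℝ ∙ v)ᗮ) 2 ∪
      (stereoInvFunAux (-v) ∘ (↑)) '' closedBall (0 : (ℝ ∙ -v)ᗮ) 2 := fun x hx ↦ by
    rcases le_total ⟪v, x⟫ 0 with h | h
    · exact Or.inl (sphere_inter_inner_nonpos_subset hv ⟨hx, h⟩)
    · exact Or.inr (sphere_inter_inner_nonpos_subset hv' ⟨hx, by simpa [inner_neg_left]⟩)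
  exact (measure_mono hcover).trans_lt ((measure_union_le _ _).trans_lt (ENNReal.add_lt_top.2
    ⟨hausdorffMeasure_stereoInvFunAux_image_closedBall_lt_top hv₀ 2,
      hausdorffMeasure_stereoInvFunAux_image_closedBall_lt_top (neg_ne_zero.2 hv₀) 2⟩))

theorem hausdorffMeasure_sphere_inter_le_abs_inner_pos {v : E} (hv : ‖v‖ = 1) {c : ℝ}
    (hc₀ : 0 ≤ c) (hc₁ : c < 1) :
    0 < μH[n] {x ∈ sphere (0 : E) 1 | c ≤ |⟪v, x⟫|} := by
  have : FiniteDimensional ℝ E := .of_fact_finrank_eq_succ n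
  have hv₀ : v ≠ 0 := norm_ne_zero_iff.1 (by simp [hv])
  have hball : 0 < μH[n] (ball (0 : (ℝ ∙ v)ᗮ) √(1 - c ^ 2)) := by
    rw [← Submodule.finrank_orthogonal_span_singleton (𝕜 := ℝ) (n := n) hv₀]
    exact measure_ball_pos _ _ (Real.sqrt_pos.2 (by nlinarith))
  have hsub : ball (0 : (ℝ ∙ v)ᗮ) √(1 - c ^ 2) ⊆
      (ℝ ∙ v)ᗮ.orthogonalProjectionOnto '' {x ∈ sphere (0 : E) 1 | c ≤ |⟪v, x⟫|} := by
    intro w hw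
    rw [mem_ball_zero_iff, Real.lt_sqrt (norm_nonneg _)] at hw
    have hwv : ⟪(w : E), v⟫ = 0 := Submodule.mem_orthogonal_singleton_iff_inner_left.1 w.2
    set s := √(1 - ‖w‖ ^ 2)
    have hs : s ^ 2 = 1 - ‖w‖ ^ 2 := Real.sq_sqrt (by nlinarith)
    refine ⟨w + s • v, ⟨?_, ?_⟩, ?_⟩
    · rw [mem_sphere_zero_iff_norm, ← pow_eq_one_iff_of_nonneg (norm_nonneg _) two_ne_zero,
        norm_add_sq_real, inner_smul_right, hwv, norm_smul, mul_pow, hv, Real.norm_eq_abs,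
        sq_abs, hs]
      simp
    · rw [inner_add_right, inner_smul_right, real_inner_comm, hwv, real_inner_self_eq_norm_sq, hv,
        zero_add, one_pow, mul_one, abs_of_nonneg (Real.sqrt_nonneg _)]
      nlinarith [Real.sqrt_nonneg (1 - ‖w‖ ^ 2)]
    · simp only [map_add, map_smul, Submodule.orthogonalProjectionOnto_mem_subspace_eq_self,
        Submodule.orthogonalProjectionOnto_orthogonalComplement_singleton_eq_zero, smul_zero,
        add_zero]
  calc (0 : ℝ≥0∞) < _ := hball
    _ ≤ _ := measure_mono hsub
    _ ≤ _ := hausdorffMeasure_orthogonalProjectionOnto_le _ _ _ n.cast_nonneg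

theorem exists_mul_le_setIntegral_sphere_le {Φ : ℝ → ℝ} (hΦc : Continuous Φ)
    (hΦ : MonotoneOn Φ (Ici 0)) (hΦ₀ : ∀ t, 0 ≤ t → 0 ≤ Φ t) {v : E} (hv : ‖v‖ = 1) :
    ∃ m σ : ℝ, 0 < m ∧ 0 < σ ∧
      MonotoneOn (fun ρ ↦ ∫ x in sphere (0 : E) 1, Φ (ρ * |⟪v, x⟫|) ∂μH[n]) (Ici 0) ∧
      ∀ ρ, 0 ≤ ρ → m * Φ (ρ / 2) ≤ ∫ x in sphere (0 : E) 1, Φ (ρ * |⟪v, x⟫|) ∂μH[n] ∧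
        ∫ x in sphere (0 : E) 1, Φ (ρ * |⟪v, x⟫|) ∂μH[n] ≤ σ * Φ ρ := by
  have hw : ∀ x ∈ sphere (0 : E) 1, |⟪v, x⟫| ≤ 1 := fun x hx ↦ by
    simpa [hv, mem_sphere_zero_iff_norm.1 hx] using abs_real_inner_le_norm v x
  have hwm : Measurable fun x : E ↦ ⟪v, x⟫ := (continuous_const.inner continuous_id).measurable
  have hS : MeasurableSet (sphere (0 : E) 1) := isClosed_sphere.measurableSet
  have hμS : μH[n] (sphere (0 : E) 1) ≠ ⊤ := hausdorffMeasure_sphere_lt_top.ne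
  have hcap := hausdorffMeasure_sphere_inter_le_abs_inner_pos (n := n) hv (c := 1 / 2)
    (by norm_num) (by norm_num)
  have hm : 0 < μH[n].real {x ∈ sphere (0 : E) 1 | 1 / 2 ≤ |⟪v, x⟫|} :=
    ENNReal.toReal_pos hcap.ne' (measure_ne_top_of_subset (sep_subset _ _) hμS)
  refine ⟨_, μH[n].real (sphere (0 : E) 1), hm,
    hm.trans_le (measureReal_mono (sep_subset _ _) hμS),
    monotoneOn_setIntegral_comp_mul_abs hΦc hΦ hΦ₀ hwm hw hS hμS, fun ρ hρ ↦ ⟨?_,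
    setIntegral_comp_mul_abs_le hΦ hΦ₀ hw hμS hρ⟩⟩
  simpa only [one_div_mul_eq_div] using measureReal_mul_le_setIntegral_comp_mul_abs (c := 1 / 2)
    hΦc hΦ hΦ₀ hwm hw hS hμS (by norm_num) hρ

end Sphere

section LogarithmicIntegral

variable {H g : ℝ → ℝ} {t : ℝ}

theorem intervalIntegrable_div_self_of_le_mul (hH : MonotoneOn H (Ici 0))
    (hg : MonotoneOn g (Ici 0)) (hH₀ : ∀ ρ, 0 ≤ ρ → 0 ≤ H ρ) (hHg : ∀ ρ, 0 < ρ → H ρ ≤ ρ * g ρ)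
    (ht : 0 ≤ t) : IntervalIntegrable (fun ρ ↦ H ρ / ρ) volume 0 t := by
  refine (intervalIntegrable_of_monotoneOn_Ici hg le_rfl ht).mono_fun' ?_ ?_
  · rw [uIoc_of_le ht]
    exact ((intervalIntegrable_of_monotoneOn_Ici hH le_rfl ht).aestronglyMeasurable.aemeasurable.div
      measurable_id.aemeasurable).aestronglyMeasurable
  · rw [uIoc_of_le ht, EventuallyLE, ae_restrict_iff' measurableSet_Ioc]
    refine ae_of_all _ fun ρ hρ ↦ ?_
    rw [Real.norm_of_nonneg (div_nonneg (hH₀ ρ hρ.1.le) hρ.1.le), div_le_iff₀ hρ.1, mul_comm]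
    exact hHg ρ hρ.1

theorem intervalIntegral_div_self_le_of_le_mul (hH : MonotoneOn H (Ici 0))
    (hg : MonotoneOn g (Ici 0)) (hH₀ : ∀ ρ, 0 ≤ ρ → 0 ≤ H ρ) (hHg : ∀ ρ, 0 < ρ → H ρ ≤ ρ * g ρ)
    (ht : 0 ≤ t) : ∫ ρ in (0 : ℝ)..t, H ρ / ρ ≤ ∫ ρ in (0 : ℝ)..t, g ρ :=
  intervalIntegral.integral_mono_on_of_le_Ioo ht
    (intervalIntegrable_div_self_of_le_mul hH hg hH₀ hHg ht)
    (intervalIntegrable_of_monotoneOn_Ici hg le_rfl ht) fun ρ hρ ↦ by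
      rw [div_le_iff₀ hρ.1, mul_comm]
      exact hHg ρ hρ.1

theorem half_le_intervalIntegral_div_self (hH : MonotoneOn H (Ici 0))
    (hH₀ : ∀ ρ, 0 ≤ ρ → 0 ≤ H ρ) (hint : IntervalIntegrable (fun ρ ↦ H ρ / ρ) volume 0 t)
    (ht : 0 < t) : H (t / 2) / 2 ≤ ∫ ρ in (0 : ℝ)..t, H ρ / ρ :=
  calc H (t / 2) / 2 = ∫ _ in (t / 2)..t, H (t / 2) / t := by
        simp only [intervalIntegral.integral_const, smul_eq_mul]
        field_simp
        ring
    _ ≤ ∫ ρ in (t / 2)..t, H ρ / ρ :=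
        intervalIntegral.integral_mono_on (by linarith) intervalIntegrable_const
          (hint.mono_set (uIcc_subset_uIcc
            (by rw [uIcc_of_le ht.le]; constructor <;> linarith) right_mem_uIcc)) fun ρ hρ ↦
          div_le_div₀ (hH₀ ρ (by linarith [hρ.1]))
            (hH (mem_Ici.2 (by linarith)) (mem_Ici.2 (by linarith [hρ.1])) hρ.1)
            (by linarith [hρ.1]) hρ.2
    _ ≤ ∫ ρ in (0 : ℝ)..t, H ρ / ρ :=
        intervalIntegral.integral_mono_interval (by linarith) (by linarith) le_rfl
          ((ae_restrict_iff' measurableSet_Ioc).2 (ae_of_all _ fun ρ hρ ↦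
            div_nonneg (hH₀ ρ hρ.1.le) hρ.1.le)) hint

end LogarithmicIntegral

theorem apply_four_mul_le_sq_mul {Φ : ℝ → ℝ} {K t : ℝ} (hK : 0 ≤ K)
    (hΦ : ∀ t, 0 ≤ t → Φ (2 * t) ≤ K * Φ t) (ht : 0 ≤ t) : Φ (4 * t) ≤ K ^ 2 * Φ t :=
  calc Φ (4 * t) = Φ (2 * (2 * t)) := by ring_nf
    _ ≤ K * Φ (2 * t) := hΦ _ (by positivity)
    _ ≤ K * (K * Φ t) := mul_le_mul_of_nonneg_left (hΦ t ht) hK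
    _ = K ^ 2 * Φ t := by ring

theorem exists_mul_le_intervalIntegral_div_self_le {Φ g H : ℝ → ℝ} {K m σ : ℝ}
    (hg : MonotoneOn g (Ici 0)) (hg₀ : ∀ τ, 0 ≤ τ → 0 ≤ g τ)
    (hΦ : ∀ t, 0 ≤ t → Φ t = ∫ τ in (0 : ℝ)..t, g τ) (hK : 0 < K)
    (hΔ₂ : ∀ t, 0 ≤ t → Φ (2 * t) ≤ K * Φ t) (hH : MonotoneOn H (Ici 0)) (hm : 0 < m)
    (hσ : 0 < σ) (hHΦ : ∀ ρ, 0 ≤ ρ → m * Φ (ρ / 2) ≤ H ρ ∧ H ρ ≤ σ * Φ ρ) :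
    ∃ k > 0, ∀ t : ℝ, 0 < t →
      k * Φ t ≤ ∫ ρ in (0 : ℝ)..t, H ρ / ρ ∧ ∫ ρ in (0 : ℝ)..t, H ρ / ρ ≤ σ * Φ t := by
  have hΦ₀ : ∀ t, 0 ≤ t → 0 ≤ Φ t := fun t ht ↦
    hΦ t ht ▸ intervalIntegral.integral_nonneg ht fun τ hτ ↦ hg₀ τ hτ.1
  have hH₀ : ∀ ρ, 0 ≤ ρ → 0 ≤ H ρ := fun ρ hρ ↦
    (mul_nonneg hm.le (hΦ₀ _ (by linarith))).trans (hHΦ ρ hρ).1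
  have hHg : ∀ ρ, 0 < ρ → H ρ ≤ ρ * (σ * g ρ) := fun ρ hρ ↦ by
    have := intervalIntegral_le_mul_of_monotoneOn hg hρ.le
    rw [← hΦ ρ hρ.le] at this
    nlinarith [(hHΦ ρ hρ.le).2]
  have hσg : MonotoneOn (fun ρ ↦ σ * g ρ) (Ici 0) := fun a ha b hb hab ↦
    mul_le_mul_of_nonneg_left (hg ha hb hab) hσ.le
  refine ⟨m / (2 * K ^ 2), by positivity, fun t ht ↦ ⟨?_, ?_⟩⟩
  · calc m / (2 * K ^ 2) * Φ t ≤ m / (2 * K ^ 2) * (K ^ 2 * Φ (t / 2 / 2)) := by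
          gcongr
          simpa [show 4 * (t / 2 / 2) = t by ring] using
            apply_four_mul_le_sq_mul hK.le hΔ₂ (by positivity : 0 ≤ t / 2 / 2)
      _ = m * Φ (t / 2 / 2) / 2 := by field_simp
      _ ≤ H (t / 2) / 2 := by gcongr; exact (hHΦ _ (by positivity)).1
      _ ≤ ∫ ρ in (0 : ℝ)..t, H ρ / ρ := half_le_intervalIntegral_div_self hH hH₀
          (intervalIntegrable_div_self_of_le_mul hH hσg hH₀ hHg ht.le) ht
  · calc ∫ ρ in (0 : ℝ)..t, H ρ / ρ ≤ ∫ ρ in (0 : ℝ)..t, σ * g ρ :=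
          intervalIntegral_div_self_le_of_le_mul hH hσg hH₀ hHg ht.le
      _ = σ * Φ t := by rw [intervalIntegral.integral_const_mul, hΦ t ht.le]

/-- If `Φ` satisfies the `Δ₂`-condition, then
`Ψ(t) = ∫₀^{|t|} (∫_{𝕊^{N−1}} Φ(ρ|z_N|) dS_z) dρ/ρ` is equivalent to `Φ`:
there exist `k₁, k₂ > 0` with `k₁Φ(t) ≤ Ψ(t) ≤ k₂Φ(t)` for all `t > 0`. -/
theorem stmt12
    (N : ℕ) (hN : 2 ≤ N)
    (φ : ℝ → ℝ)
    (hφpos : ∀ t : ℝ, 0 < t → 0 < φ t)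
    (hφmono : StrictMonoOn (fun t => t * φ t) (Set.Ioi (0:ℝ)))
    (Φ : ℝ → ℝ)
    (hΦ : ∀ t : ℝ, Φ t = ∫ τ in (0:ℝ)..|t|, τ * φ τ)
    (hΔ2 : ∃ K : ℝ, 1 < K ∧ ∀ t : ℝ, 0 ≤ t → Φ (2 * t) ≤ K * Φ t)
    (Ψ : ℝ → ℝ)
    (hΨ : ∀ t : ℝ, Ψ t = ∫ ρ in (0:ℝ)..|t|,
        (∫ z in Metric.sphere (0 : EuclideanSpace ℝ (Fin N)) 1,
            Φ (ρ * |z ⟨N - 1, by omega⟩|) ∂(μH[(N:ℝ) - 1])) / ρ) :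
    ∃ k₁ k₂ : ℝ, 0 < k₁ ∧ 0 < k₂ ∧
      ∀ t : ℝ, 0 < t → k₁ * Φ t ≤ Ψ t ∧ Ψ t ≤ k₂ * Φ t := by
  obtain ⟨K, hK₁, hK⟩ := hΔ2
  set i : Fin N := ⟨N - 1, by omega⟩
  have : Fact (finrank ℝ (EuclideanSpace ℝ (Fin N)) = N - 1 + 1) := ⟨by simp; omega⟩
  set v := EuclideanSpace.single i (1 : ℝ)
  have hv : ‖v‖ = 1 := by simp [v]
  have hvz : ∀ z : EuclideanSpace ℝ (Fin N), z i = ⟪v, z⟫ := fun z ↦ by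
    simp [v, EuclideanSpace.inner_single_left]
  have hdim : (N : ℝ) - 1 = ((N - 1 : ℕ) : ℝ) := by rw [Nat.cast_sub (by omega), Nat.cast_one]
  simp only [hvz, hdim] at hΨ
  set g := fun τ ↦ τ * φ τ
  have hg : MonotoneOn g (Ici 0) := monotoneOn_Ici_of_strictMonoOn_Ioi hφpos hφmono
  have hg₀ : ∀ τ, 0 ≤ τ → 0 ≤ g τ := fun τ hτ ↦ by simpa [g] using hg self_mem_Ici hτ hτ
  have hΦt : ∀ t, 0 ≤ t → Φ t = ∫ τ in (0 : ℝ)..t, g τ := fun t ht ↦ by rw [hΦ, abs_of_nonneg ht]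
  have hΦc : Continuous Φ := funext hΦ ▸ continuous_intervalIntegral_abs_of_monotoneOn hg
  have hΦm : MonotoneOn Φ (Ici 0) :=
    (monotoneOn_intervalIntegral_of_monotoneOn hg hg₀).congr fun t ht ↦ (hΦt t ht).symm
  have hΦ₀ : ∀ t, 0 ≤ t → 0 ≤ Φ t := fun t ht ↦
    hΦt t ht ▸ intervalIntegral.integral_nonneg ht fun τ hτ ↦ hg₀ τ hτ.1
  obtain ⟨m, σ, hm, hσ, hH, hHΦ⟩ :=
    exists_mul_le_setIntegral_sphere_le (n := N - 1) hΦc hΦm hΦ₀ hv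
  obtain ⟨k, hk, hΨΦ⟩ :=
    exists_mul_le_intervalIntegral_div_self_le hg hg₀ hΦt (by linarith) hK hH hm hσ hHΦ
  exact ⟨k, σ, hk, hσ, fun t ht ↦ by rw [hΨ, abs_of_pos ht]; exact hΨΦ t ht⟩
end
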